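/- arXiv:0811.1658 — 10 statements merged into one kernel-verified Lean document; each statement's English description precedes it below -/
import Mathlib

section
/- Suppose in addition that U is convex. Then there exists a smooth function h : U → ℝ such that g is the Hessian of h, i.e. g_{ij}(x) = ∂_i ∂_j h(x) for all x ∈ U and all i, j. -/
open Matrix

noncomputable section

/-- Partial derivative of a function on `ℝⁿ` in the `i`-th coordinate direction. -/
def pd {n : ℕ} (i : Fin n) (f : (Fin n → ℝ) → ℝ) (x : Fin n → ℝ) : ℝ :=
  fderiv ℝ f x (Pi.single i 1)

/-- Entrywise partial derivative of a matrix-valued map on `ℝⁿ`. -/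
def mpd {n : ℕ} (i : Fin n) (F : (Fin n → ℝ) → Matrix (Fin n) (Fin n) ℝ)
    (x : Fin n → ℝ) : Matrix (Fin n) (Fin n) ℝ :=
  Matrix.of fun a b => pd i (fun y => F y a b) x

/-- Hessian metric data on a set `U ⊆ ℝⁿ`: a smooth symmetric invertible
matrix-valued map whose cubic form `S_{ijk} = ∂_k g_{ij}` is totally symmetric. -/
structure HessianData (n : ℕ) (U : Set (Fin n → ℝ))
    (g : (Fin n → ℝ) → Matrix (Fin n) (Fin n) ℝ) : Prop where
  isOpen : IsOpen U
  smooth : ∀ i j, ContDiffOn ℝ (⊤ : ℕ∞) (fun x => g x i j) U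
  symm : ∀ x ∈ U, (g x).IsSymm
  invertible : ∀ x ∈ U, IsUnit (g x).det
  cubic_symm : ∀ x ∈ U, ∀ i j k : Fin n,
    pd k (fun y => g y i j) x = pd j (fun y => g y i k) x

/-- `Ŝᵢ(x) = ½ g(x)⁻¹ ∂ᵢ g(x)`. -/
def Shat {n : ℕ} (g : (Fin n → ℝ) → Matrix (Fin n) (Fin n) ℝ)
    (i : Fin n) (x : Fin n → ℝ) : Matrix (Fin n) (Fin n) ℝ :=
  (2⁻¹ : ℝ) • ((g x)⁻¹ * mpd i g x)



noncomputable section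

/-- The dot product as a continuous linear map in two stages. -/
def dotL (n : ℕ) : (Fin n → ℝ) →L[ℝ] ((Fin n → ℝ) →L[ℝ] ℝ) :=
  LinearMap.toContinuousLinearMap
  { toFun := fun w => LinearMap.toContinuousLinearMap
      { toFun := fun h => ∑ i, w i * h i
        map_add' := by intro a b; simp [mul_add, Finset.sum_add_distrib]
        map_smul' := by intro c a; simp [Finset.mul_sum, mul_left_comm] }
    map_add' := by
      intro a b; apply ContinuousLinearMap.ext; intro h
      simp [add_mul, Finset.sum_add_distrib]
    map_smul' := by
      intro c a; apply ContinuousLinearMap.ext; intro h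
      simp [Finset.mul_sum, mul_assoc] }

@[simp] lemma dotL_apply {n : ℕ} (w h : Fin n → ℝ) : dotL n w h = ∑ i, w i * h i := rfl

@[simp] lemma dotL_single {n : ℕ} (w : Fin n → ℝ) (j : Fin n) :
    dotL n w (Pi.single j 1) = w j := by
  rw [dotL_apply]
  rw [Finset.sum_eq_single j]
  · simp
  · intro i _ hij; simp [Pi.single_apply, hij]
  · simp

lemma single_eq_smul {n : ℕ} (a : Fin n → ℝ) (i : Fin n) :
    Pi.single i (a i) = a i • (Pi.single i 1 : Fin n → ℝ) := by
  ext j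
  rcases eq_or_ne j i with rfl | hji
  · simp
  · simp [Pi.single_apply, hji]

/-- Bilinear symmetry from symmetry on basis vectors. -/
lemma dotL_fderiv_symm {n : ℕ} (W : (Fin n → ℝ) →L[ℝ] (Fin n → ℝ))
    (hcl : ∀ i j, W (Pi.single i 1) j = W (Pi.single j 1) i) (a b : Fin n → ℝ) :
    dotL n (W a) b = dotL n (W b) a := by
  have expand : ∀ c d : Fin n → ℝ, dotL n (W c) d
      = ∑ i, ∑ j, c i * (W (Pi.single i 1) j * d j) := by
    intro c d
    have hc : c = ∑ i, c i • (Pi.single i 1 : Fin n → ℝ) := by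
      conv_lhs => rw [← Finset.univ_sum_single c]
      exact Finset.sum_congr rfl fun i _ => single_eq_smul c i
    calc dotL n (W c) d = dotL n (W (∑ i, c i • (Pi.single i 1 : Fin n → ℝ))) d := by rw [← hc]
      _ = ∑ i, c i * dotL n (W (Pi.single i 1)) d := by
          rw [map_sum]; rw [map_sum]
          simp [ContinuousLinearMap.sum_apply]
      _ = ∑ i, ∑ j, c i * (W (Pi.single i 1) j * d j) := by
          simp [dotL_apply, Finset.mul_sum]
  rw [expand, expand, Finset.sum_comm]
  refine Finset.sum_congr rfl fun i _ => Finset.sum_congr rfl fun j _ => ?_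
  rw [hcl j i]; ring


open MeasureTheory Metric Set Filter
open scoped ENNReal NNReal Topology

variable {E : Type*} [NormedAddCommGroup E] [NormedSpace ℝ E]

open MeasureTheory Metric Set in
set_option maxHeartbeats 1000000 in
lemma poincare {n : ℕ} {U : Set (Fin n → ℝ)} (hU : IsOpen U) (hconv : Convex ℝ U)
    {x₀ : Fin n → ℝ} (hx₀ : x₀ ∈ U) {V : (Fin n → ℝ) → (Fin n → ℝ)}
    (hV : ContDiffOn ℝ (⊤ : ℕ∞) V U)
    (hsym : ∀ y ∈ U, ∀ a b, dotL n (fderiv ℝ V y a) b = dotL n (fderiv ℝ V y b) a) :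
    ∃ F : (Fin n → ℝ) → ℝ, ∀ x ∈ U, HasFDerivAt F (dotL n (V x)) x := by
  refine ⟨fun x => ∫ t in (0:ℝ)..1, dotL n (V (x₀ + t • (x - x₀))) (x - x₀), ?_⟩
  intro x hx
  have hseg : segment ℝ x₀ x ⊆ U := hconv.segment_subset hx₀ hx
  have hKcpt : IsCompact (segment ℝ x₀ x) := by
    rw [segment_eq_image']
    exact isCompact_Icc.image (by continuity)
  obtain ⟨δ, δpos, hδ⟩ := hKcpt.exists_cthickening_subset_open hU hseg
  have hK'cpt : IsCompact (cthickening δ (segment ℝ x₀ x)) := hKcpt.cthickening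
  -- membership of the deformed segment
  have hmem : ∀ t ∈ Icc (0:ℝ) 1, ∀ y ∈ closedBall x δ,
      x₀ + t • (y - x₀) ∈ cthickening δ (segment ℝ x₀ x) := by
    intro t ht y hy
    have h1 : x₀ + t • (x - x₀) ∈ segment ℝ x₀ x := by
      rw [segment_eq_image']; exact ⟨t, ht, rfl⟩
    refine mem_cthickening_of_dist_le _ _ δ _ h1 ?_
    have h2 : (x₀ + t • (y - x₀)) - (x₀ + t • (x - x₀)) = t • (y - x) := by
      module
    rw [dist_eq_norm, h2, norm_smul, Real.norm_eq_abs]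
    have h3 : ‖y - x‖ ≤ δ := by rw [← dist_eq_norm]; exact hy
    have h4 : |t| ≤ 1 := abs_le.2 ⟨by linarith [ht.1], ht.2⟩
    nlinarith [norm_nonneg (y - x), abs_nonneg t]
  have hmemU : ∀ t ∈ Icc (0:ℝ) 1, ∀ y ∈ closedBall x δ, x₀ + t • (y - x₀) ∈ U :=
    fun t ht y hy => hδ (hmem t ht y hy)
  have hVc : ContinuousOn V U := hV.continuousOn
  have hV'c : ContinuousOn (fderiv ℝ V) U := hV.continuousOn_fderiv_of_isOpen hU (by simp)
  have hdiffat : ∀ z ∈ U, DifferentiableAt ℝ V z := fun z hz =>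
    (hV.contDiffAt (hU.mem_nhds hz)).differentiableAt (by simp)
  set F' : (Fin n → ℝ) → ℝ → ((Fin n → ℝ) →L[ℝ] ℝ) := fun y t =>
    dotL n (V (x₀ + t • (y - x₀))) + ((dotL n).flip (y - x₀)).comp
      ((fderiv ℝ V (x₀ + t • (y - x₀))).comp (t • ContinuousLinearMap.id ℝ (Fin n → ℝ)))
    with hF'def
  have hγcont : ∀ y : Fin n → ℝ, Continuous fun t : ℝ => x₀ + t • (y - x₀) := fun y =>
    continuous_const.add (continuous_id.smul continuous_const)
  -- continuity in t of the integrand, for y in the closed ball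
  have hcont : ∀ y ∈ closedBall x δ,
      ContinuousOn (fun t : ℝ => V (x₀ + t • (y - x₀))) (Icc 0 1) := by
    intro y hy
    exact hVc.comp (hγcont y).continuousOn (fun t ht => hmemU t ht y hy)
  have hcontF : ∀ y ∈ closedBall x δ,
      ContinuousOn (fun t : ℝ => dotL n (V (x₀ + t • (y - x₀))) (y - x₀)) (Icc 0 1) := by
    intro y hy
    exact (((dotL n).flip (y - x₀)).continuous.comp_continuousOn (hcont y hy))
  have hcontF' : ContinuousOn (fun t : ℝ => F' x t) (Icc 0 1) := by
    refine ContinuousOn.add ?_ ?_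
    · exact (dotL n).continuous.comp_continuousOn (hcont x (mem_closedBall_self δpos.le))
    · refine ContinuousOn.clm_comp continuousOn_const ?_
      refine ContinuousOn.clm_comp ?_ ?_
      · exact hV'c.comp (hγcont x).continuousOn
          (fun t ht => hmemU t ht x (mem_closedBall_self δpos.le))
      · exact (continuous_id.smul continuous_const).continuousOn
  have hball : ∀ y ∈ ball x δ, y ∈ closedBall x δ := fun y hy => ball_subset_closedBall hy
  -- differentiability in y
  have h_diff : ∀ t ∈ Set.uIoc (0:ℝ) 1, ∀ y ∈ ball x δ,
      HasFDerivAt (fun y' => dotL n (V (x₀ + t • (y' - x₀))) (y' - x₀)) (F' y t) y := by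
    intro t ht y hy
    have htI : t ∈ Icc (0:ℝ) 1 := by
      rw [Set.uIoc_of_le zero_le_one] at ht; exact Ioc_subset_Icc_self ht
    have hzU : x₀ + t • (y - x₀) ∈ U := hmemU t htI y (hball y hy)
    have hsub : HasFDerivAt (fun y' : Fin n → ℝ => y' - x₀)
        (ContinuousLinearMap.id ℝ (Fin n → ℝ)) y := (hasFDerivAt_id y).sub_const x₀
    have hγd : HasFDerivAt (fun y' => x₀ + t • (y' - x₀))
        (t • ContinuousLinearMap.id ℝ (Fin n → ℝ)) y := (hsub.const_smul t).const_add x₀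
    have hVd : HasFDerivAt V (fderiv ℝ V (x₀ + t • (y - x₀))) (x₀ + t • (y - x₀)) :=
      (hdiffat _ hzU).hasFDerivAt
    have hc : HasFDerivAt (fun y' => dotL n (V (x₀ + t • (y' - x₀))))
        ((dotL n).comp ((fderiv ℝ V (x₀ + t • (y - x₀))).comp
          (t • ContinuousLinearMap.id ℝ (Fin n → ℝ)))) y := by
      have h1 := hVd.comp y hγd
      have h2 := (dotL n).hasFDerivAt.comp y h1
      rw [← ContinuousLinearMap.comp_assoc] at h2
      exact h2
    have hfin : HasFDerivAt (fun y' => dotL n (V (x₀ + t • (y' - x₀))) (y' - x₀)) (F' y t) y := hc.clm_apply hsub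
    convert hfin using 1
  -- bound
  obtain ⟨M₁, hM₁⟩ := hK'cpt.exists_bound_of_continuousOn (hVc.mono hδ)
  obtain ⟨M₂, hM₂⟩ := hK'cpt.exists_bound_of_continuousOn (hV'c.mono hδ)
  have hx₀K' : x₀ ∈ cthickening δ (segment ℝ x₀ x) :=
    self_subset_cthickening _ (left_mem_segment ℝ x₀ x)
  have hM₁0 : 0 ≤ M₁ := le_trans (norm_nonneg _) (hM₁ _ hx₀K')
  have hM₂0 : 0 ≤ M₂ := le_trans (norm_nonneg _) (hM₂ _ hx₀K')
  set C : ℝ := ‖dotL n‖ * M₁ + ‖dotL n‖ * (‖x - x₀‖ + δ) * M₂ with hCdef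
  have h_bound : ∀ t ∈ Set.uIoc (0:ℝ) 1, ∀ y ∈ ball x δ, ‖F' y t‖ ≤ C := by
    intro t ht y hy
    have htI : t ∈ Icc (0:ℝ) 1 := by
      rw [Set.uIoc_of_le zero_le_one] at ht; exact Ioc_subset_Icc_self ht
    have hzK' : x₀ + t • (y - x₀) ∈ cthickening δ (segment ℝ x₀ x) :=
      hmem t htI y (hball y hy)
    have e1 : ‖dotL n (V (x₀ + t • (y - x₀)))‖ ≤ ‖dotL n‖ * M₁ :=
      le_trans ((dotL n).le_opNorm _)
        (mul_le_mul_of_nonneg_left (hM₁ _ hzK') (ContinuousLinearMap.opNorm_nonneg _))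
    have e2a : ‖(dotL n).flip (y - x₀)‖ ≤ ‖dotL n‖ * (‖x - x₀‖ + δ) := by
      refine le_trans (((dotL n).flip).le_opNorm _) ?_
      rw [ContinuousLinearMap.opNorm_flip]
      refine mul_le_mul_of_nonneg_left ?_ (ContinuousLinearMap.opNorm_nonneg _)
      have : y - x₀ = (y - x) + (x - x₀) := by abel
      rw [this]
      refine le_trans (norm_add_le _ _) ?_
      have : ‖y - x‖ ≤ δ := by rw [← dist_eq_norm]; exact le_of_lt hy
      linarith
    have e2b : ‖(fderiv ℝ V (x₀ + t • (y - x₀))).comp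
        (t • ContinuousLinearMap.id ℝ (Fin n → ℝ))‖ ≤ M₂ := by
      refine le_trans (ContinuousLinearMap.opNorm_comp_le _ _) ?_
      have h5 : ‖t • ContinuousLinearMap.id ℝ (Fin n → ℝ)‖ ≤ 1 := by
        refine le_trans (norm_smul_le t (ContinuousLinearMap.id ℝ (Fin n → ℝ))) ?_
        rw [Real.norm_eq_abs]
        have h4 : |t| ≤ 1 := abs_le.2 ⟨by linarith [htI.1], htI.2⟩
        nlinarith [ContinuousLinearMap.norm_id_le (𝕜 := ℝ) (E := Fin n → ℝ),
          norm_nonneg (ContinuousLinearMap.id ℝ (Fin n → ℝ)), abs_nonneg t]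
      calc ‖fderiv ℝ V (x₀ + t • (y - x₀))‖ * ‖t • ContinuousLinearMap.id ℝ (Fin n → ℝ)‖
          ≤ M₂ * 1 := mul_le_mul (hM₂ _ hzK') h5 (norm_nonneg _) hM₂0
        _ = M₂ := mul_one M₂
    refine le_trans (norm_add_le _ _) ?_
    rw [hCdef]
    have e2 : ‖((dotL n).flip (y - x₀)).comp ((fderiv ℝ V (x₀ + t • (y - x₀))).comp
        (t • ContinuousLinearMap.id ℝ (Fin n → ℝ)))‖ ≤ ‖dotL n‖ * (‖x - x₀‖ + δ) * M₂ := by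
      refine le_trans (ContinuousLinearMap.opNorm_comp_le _ _) ?_
      exact mul_le_mul e2a e2b (norm_nonneg _) (by positivity)
    linarith
  -- measurability
  have hF_meas : ∀ᶠ y in nhds x, AEStronglyMeasurable
      (fun t : ℝ => dotL n (V (x₀ + t • (y - x₀))) (y - x₀))
      (volume.restrict (Set.uIoc (0:ℝ) 1)) := by
    filter_upwards [Metric.ball_mem_nhds x δpos] with y hy
    rw [Set.uIoc_of_le (zero_le_one (α := ℝ))]
    exact ((hcontF y (hball y hy)).mono Ioc_subset_Icc_self).aestronglyMeasurable
      measurableSet_Ioc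
  have hF_int : IntervalIntegrable
      (fun t : ℝ => dotL n (V (x₀ + t • (x - x₀))) (x - x₀)) volume 0 1 := by
    apply ContinuousOn.intervalIntegrable
    rw [Set.uIcc_of_le (zero_le_one (α := ℝ))]
    exact hcontF x (mem_closedBall_self δpos.le)
  have hF'_meas : AEStronglyMeasurable (F' x) (volume.restrict (Set.uIoc (0:ℝ) 1)) := by
    rw [Set.uIoc_of_le (zero_le_one (α := ℝ))]
    exact (hcontF'.mono Ioc_subset_Icc_self).aestronglyMeasurable measurableSet_Ioc
  have hF'_int : IntervalIntegrable (F' x) volume 0 1 := by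
    apply ContinuousOn.intervalIntegrable
    rw [Set.uIcc_of_le (zero_le_one (α := ℝ))]
    exact hcontF'
  have key := intervalIntegral.hasFDerivAt_integral_of_dominated_of_fderiv_le
    (μ := volume) (bound := fun _ => C) (Metric.ball_mem_nhds x δpos) hF_meas hF_int hF'_meas
    (Filter.Eventually.of_forall h_bound) intervalIntegrable_const
    (Filter.Eventually.of_forall h_diff)
  -- identify the derivative
  have hInt_eq : (∫ t in (0:ℝ)..1, F' x t) = dotL n (V x) := by
    ext h
    rw [ContinuousLinearMap.intervalIntegral_apply hF'_int h]
    have hd : ∀ t ∈ Set.uIcc (0:ℝ) 1,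
        HasDerivAt (fun s : ℝ => s * dotL n (V (x₀ + s • (x - x₀))) h) (F' x t h) t := by
      intro t ht
      rw [Set.uIcc_of_le (zero_le_one (α := ℝ))] at ht
      have hzU : x₀ + t • (x - x₀) ∈ U := hmemU t ht x (mem_closedBall_self δpos.le)
      have h1 : HasDerivAt (fun s : ℝ => x₀ + s • (x - x₀)) (x - x₀) t := by
        have h1a : HasDerivAt (fun s : ℝ => s • (x - x₀)) (x - x₀) t := by
          simpa using (hasDerivAt_id t).smul_const (x - x₀)
        exact h1a.const_add x₀
      have h2 : HasDerivAt (fun s : ℝ => V (x₀ + s • (x - x₀)))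
          (fderiv ℝ V (x₀ + t • (x - x₀)) (x - x₀)) t :=
        (hdiffat _ hzU).hasFDerivAt.comp_hasDerivAt t h1
      have h3 : HasDerivAt (fun s : ℝ => dotL n (V (x₀ + s • (x - x₀))) h)
          (dotL n (fderiv ℝ V (x₀ + t • (x - x₀)) (x - x₀)) h) t :=
        (((dotL n).flip h).hasFDerivAt.comp_hasDerivAt t h2)
      have h4 : HasDerivAt (fun s : ℝ => s * dotL n (V (x₀ + s • (x - x₀))) h) _ t := (hasDerivAt_id t).mul h3
      convert h4 using 1
      have h5 : F' x t h = dotL n (V (x₀ + t • (x - x₀))) h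
          + t * dotL n (fderiv ℝ V (x₀ + t • (x - x₀)) (x - x₀)) h := by
        simp only [hF'def, ContinuousLinearMap.add_apply, ContinuousLinearMap.comp_apply,
          ContinuousLinearMap.flip_apply, ContinuousLinearMap.smul_apply,
          ContinuousLinearMap.coe_id', id_eq]
        rw [_root_.map_smul, _root_.map_smul, ContinuousLinearMap.smul_apply,
          smul_eq_mul, hsym _ hzU]
      rw [h5]; simp only [id_eq]; ring
    have hint : IntervalIntegrable (fun t => F' x t h) volume 0 1 := by
      apply ContinuousOn.intervalIntegrable
      rw [Set.uIcc_of_le (zero_le_one (α := ℝ))]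
      exact (ContinuousLinearMap.apply ℝ ℝ h).continuous.comp_continuousOn hcontF'
    rw [intervalIntegral.integral_eq_sub_of_hasDerivAt hd hint]
    have eone : x₀ + (1:ℝ) • (x - x₀) = x := by module
    simp only [one_mul, zero_mul, eone, sub_zero, zero_smul]
  rw [hInt_eq] at key
  exact key


lemma pd_coord {n : ℕ} {V : (Fin n → ℝ) → (Fin n → ℝ)} {x : Fin n → ℝ}
    (hdiff : DifferentiableAt ℝ V x) (i j : Fin n) :
    pd i (fun y => V y j) x = fderiv ℝ V x (Pi.single i 1) j := by
  have h1 : HasFDerivAt (fun y => V y j)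
      ((ContinuousLinearMap.proj (R := ℝ) (φ := fun _ : Fin n => ℝ) j).comp (fderiv ℝ V x)) x :=
    (ContinuousLinearMap.proj (R := ℝ) (φ := fun _ : Fin n => ℝ) j).hasFDerivAt.comp x
      hdiff.hasFDerivAt
  simp only [pd]
  rw [h1.fderiv]
  rfl

open MeasureTheory Metric Set in
lemma smooth_of_hasFDerivAt {n : ℕ} {U : Set (Fin n → ℝ)} (hU : IsOpen U)
    {F : (Fin n → ℝ) → ℝ} {V : (Fin n → ℝ) → (Fin n → ℝ)} (hV : ContDiffOn ℝ (⊤ : ℕ∞) V U)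
    (hF : ∀ x ∈ U, HasFDerivAt F (dotL n (V x)) x) : ContDiffOn ℝ (⊤ : ℕ∞) F U := by
  rw [contDiffOn_infty_iff_fderiv_of_isOpen hU]
  refine ⟨fun x hx => (hF x hx).differentiableAt.differentiableWithinAt, ?_⟩
  exact ((dotL n).contDiff.comp_contDiffOn hV).congr (fun x hx => (hF x hx).fderiv)

/-- On a convex open set, Hessian metric data admits a global smooth
potential `h` with `g_{ij} = ∂_i ∂_j h` on `U`. -/
theorem stmt_0 {n : ℕ} (hn : 1 ≤ n) (U : Set (Fin n → ℝ))
    (g : (Fin n → ℝ) → Matrix (Fin n) (Fin n) ℝ)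
    (hg : HessianData n U g) (hconv : Convex ℝ U) :
    ∃ h : (Fin n → ℝ) → ℝ, ContDiffOn ℝ (⊤ : ℕ∞) h U ∧
      ∀ x ∈ U, ∀ i j : Fin n, g x i j = pd i (pd j h) x := by
  rcases Set.eq_empty_or_nonempty U with rfl | ⟨x₀, hx₀⟩
  · exact ⟨0, fun x hx => hx.elim, fun x hx => hx.elim⟩
  have hU := hg.isOpen
  -- Stage 1: potentials for each row of g
  have hVj : ∀ j, ContDiffOn ℝ (⊤ : ℕ∞) (fun x (i : Fin n) => g x j i) U := fun j =>
    contDiffOn_pi.mpr (fun i => hg.smooth j i)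
  have hdiffVj : ∀ j, ∀ y ∈ U, DifferentiableAt ℝ (fun x (i : Fin n) => g x j i) y :=
    fun j y hy => ((hVj j).contDiffAt (hU.mem_nhds hy)).differentiableAt (by simp)
  have hsymVj : ∀ j, ∀ y ∈ U, ∀ a b,
      dotL n (fderiv ℝ (fun x (i : Fin n) => g x j i) y a) b
        = dotL n (fderiv ℝ (fun x (i : Fin n) => g x j i) y b) a := by
    intro j y hy a b
    apply dotL_fderiv_symm
    intro i k
    rw [← pd_coord (hdiffVj j y hy), ← pd_coord (hdiffVj j y hy)]
    exact hg.cubic_symm y hy j k i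
  choose f hf using fun j : Fin n => poincare hU hconv hx₀ (hVj j) (hsymVj j)
  have hfsmooth : ∀ j, ContDiffOn ℝ (⊤ : ℕ∞) (f j) U := fun j =>
    smooth_of_hasFDerivAt hU (hVj j) (hf j)
  have hpdf : ∀ j, ∀ x ∈ U, ∀ i, pd i (f j) x = g x j i := by
    intro j x hx i
    simp only [pd]
    rw [(hf j x hx).fderiv, dotL_single]
  -- Stage 2: potential for the gradient field
  have hWsmooth : ContDiffOn ℝ (⊤ : ℕ∞) (fun x (j : Fin n) => f j x) U :=
    contDiffOn_pi.mpr hfsmooth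
  have hWdiff : ∀ y ∈ U, DifferentiableAt ℝ (fun x (j : Fin n) => f j x) y :=
    fun y hy => (hWsmooth.contDiffAt (hU.mem_nhds hy)).differentiableAt (by simp)
  have hsymW : ∀ y ∈ U, ∀ a b,
      dotL n (fderiv ℝ (fun x (j : Fin n) => f j x) y a) b
        = dotL n (fderiv ℝ (fun x (j : Fin n) => f j x) y b) a := by
    intro y hy a b
    apply dotL_fderiv_symm
    intro i k
    rw [← pd_coord (hWdiff y hy), ← pd_coord (hWdiff y hy)]
    have e1 : pd i (fun x => f k x) y = g y k i := hpdf k y hy i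
    have e2 : pd k (fun x => f i x) y = g y i k := hpdf i y hy k
    rw [e1, e2]
    have hs := hg.symm y hy
    exact (congrFun (congrFun hs i) k).symm ▸ rfl
  obtain ⟨h, hh⟩ := poincare hU hconv hx₀ hWsmooth hsymW
  refine ⟨h, smooth_of_hasFDerivAt hU hWsmooth hh, ?_⟩
  intro x hx i j
  have heq : ∀ y ∈ U, pd j h y = f j y := by
    intro y hy
    simp only [pd]
    rw [(hh y hy).fderiv, dotL_single]
  have hev : pd j h =ᶠ[nhds x] f j := Filter.eventuallyEq_of_mem (hU.mem_nhds hx) heq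
  have e3 : pd i (pd j h) x = pd i (f j) x := by
    simp only [pd]
    rw [hev.fderiv_eq]
  rw [e3, hpdf j x hx i]
  have hs := hg.symm x hx
  exact (congrFun (congrFun hs i) j).symm
end
end
end

section
/- Define vector fields X^i : U → ℝⁿ by X^i(x) := g(x)⁻¹ e_i, where e_1,…,e_n is the standard basis (these are the g-gradients of the affine coordinate functions). Then for all i, j the Lie bracket vanishes: (D X^j)(x)(X^i(x)) − (D X^i)(x)(X^j(x)) = 0 for every x ∈ U, where D denotes the Fréchet derivative. -/
open Matrix

noncomputable section

lemma diffAt_finprod {n : ℕ} {x : Fin n → ℝ} {ι : Type*} (s : Finset ι)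
    (f : ι → (Fin n → ℝ) → ℝ)
    (h : ∀ i ∈ s, DifferentiableAt ℝ (f i) x) :
    DifferentiableAt ℝ (fun y => ∏ i ∈ s, f i y) x := by
  classical
  induction s using Finset.induction with
  | empty => simp
  | insert _ _ hni ih =>
    simp only [Finset.prod_insert hni]
    exact (h _ (Finset.mem_insert_self _ _)).mul
      (ih fun i hi => h i (Finset.mem_insert_of_mem hi))

lemma diffAt_det {n : ℕ} {x : Fin n → ℝ} (A : (Fin n → ℝ) → Matrix (Fin n) (Fin n) ℝ)
    (h : ∀ a b, DifferentiableAt ℝ (fun y => A y a b) x) :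
    DifferentiableAt ℝ (fun y => (A y).det) x := by
  simp only [Matrix.det_apply']
  apply DifferentiableAt.fun_sum
  intro σ _
  exact DifferentiableAt.const_mul
    (diffAt_finprod Finset.univ (fun i y => A y (σ i) i) (fun i _ => h _ _)) _

lemma diffAt_inv_entry {n : ℕ} {x : Fin n → ℝ} (g : (Fin n → ℝ) → Matrix (Fin n) (Fin n) ℝ)
    (h : ∀ a b, DifferentiableAt ℝ (fun y => g y a b) x)
    (hdet : (g x).det ≠ 0) (a b : Fin n) :
    DifferentiableAt ℝ (fun y => (g y)⁻¹ a b) x := by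
  have hadj : DifferentiableAt ℝ (fun y => (g y).adjugate a b) x := by
    simp only [Matrix.adjugate_apply]
    apply diffAt_det
    intro c d
    simp only [Matrix.updateRow_apply]
    by_cases hc : c = b
    · simp [hc]
    · simpa [hc] using h c d
  have heq : (fun y => (g y)⁻¹ a b) = fun y => ((g y).det)⁻¹ * (g y).adjugate a b := by
    funext y
    rw [Matrix.inv_def, Matrix.smul_apply, Ring.inverse_eq_inv', smul_eq_mul]
  rw [heq]
  exact ((diffAt_det g h).inv hdet).mul hadj

/-- the gradient vector fields `Xⁱ = g⁻¹ eᵢ` of the affine coordinate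
functions of a Hessian manifold commute. -/
theorem stmt_2 {n : ℕ} (hn : 1 ≤ n) (U : Set (Fin n → ℝ))
    (g : (Fin n → ℝ) → Matrix (Fin n) (Fin n) ℝ)
    (hg : HessianData n U g) :
    ∀ x ∈ U, ∀ i j : Fin n,
      fderiv ℝ (fun y => (g y)⁻¹ *ᵥ Pi.single j 1) x ((g x)⁻¹ *ᵥ Pi.single i 1)
        - fderiv ℝ (fun y => (g y)⁻¹ *ᵥ Pi.single i 1) x ((g x)⁻¹ *ᵥ Pi.single j 1)
        = 0 := by
  intro x hx i j
  have hxU : U ∈ nhds x := hg.isOpen.mem_nhds hx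
  have hgd : ∀ a b, DifferentiableAt ℝ (fun y => g y a b) x := fun a b =>
    ((hg.smooth a b).contDiffAt hxU).differentiableAt (by simp)
  have hdet0 : (g x).det ≠ 0 := by
    simpa [isUnit_iff_ne_zero] using hg.invertible x hx
  have hinv : ∀ a b, DifferentiableAt ℝ (fun y => (g y)⁻¹ a b) x := fun a b =>
    diffAt_inv_entry g hgd hdet0 a b
  -- key derivative identity from g * g⁻¹ = 1
  have key : ∀ (a c : Fin n) (v : Fin n → ℝ),
      ∑ b, (g x a b * fderiv ℝ (fun y => (g y)⁻¹ b c) x v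
        + fderiv ℝ (fun y => g y a b) x v * (g x)⁻¹ b c) = 0 := by
    intro a c v
    have hds : fderiv ℝ (fun y => ∑ b, g y a b * (g y)⁻¹ b c) x
        = ∑ b, fderiv ℝ (fun y => g y a b * (g y)⁻¹ b c) x :=
      fderiv_fun_sum (fun b _ => (hgd a b).mul (hinv b c))
    have hev : fderiv ℝ (fun y => ∑ b, g y a b * (g y)⁻¹ b c) x = 0 := by
      have hEq : (fun y => ∑ b, g y a b * (g y)⁻¹ b c)
          =ᶠ[nhds x] (fun _ => (1 : Matrix (Fin n) (Fin n) ℝ) a c) := by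
        filter_upwards [hxU] with y hy
        rw [← Matrix.mul_apply, Matrix.mul_nonsing_inv _ (hg.invertible y hy)]
      rw [hEq.fderiv_eq]
      exact fderiv_const_apply _
    have hz : ∑ b, fderiv ℝ (fun y => g y a b * (g y)⁻¹ b c) x = 0 := by
      rw [← hds]; exact hev
    calc ∑ b, (g x a b * fderiv ℝ (fun y => (g y)⁻¹ b c) x v
          + fderiv ℝ (fun y => g y a b) x v * (g x)⁻¹ b c)
        = ∑ b, (fderiv ℝ (fun y => g y a b * (g y)⁻¹ b c) x) v := by
          apply Finset.sum_congr rfl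
          intro b _
          rw [fderiv_fun_mul (hgd a b) (hinv b c)]
          simp only [ContinuousLinearMap.add_apply, ContinuousLinearMap.smul_apply,
            smul_eq_mul]
          ring
      _ = (∑ b, fderiv ℝ (fun y => g y a b * (g y)⁻¹ b c) x) v := by
          rw [ContinuousLinearMap.sum_apply]
      _ = 0 := by rw [hz]; rfl
  -- solve for the derivative of the inverse
  have hsolve : ∀ (c q : Fin n) (v : Fin n → ℝ),
      fderiv ℝ (fun y => (g y)⁻¹ c q) x v
        = -∑ a, ∑ b, (g x)⁻¹ c a
            * (fderiv ℝ (fun y => g y a b) x v * (g x)⁻¹ b q) := by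
    intro c q v
    have H : ∑ a, (g x)⁻¹ c a * (∑ b, (g x a b * fderiv ℝ (fun y => (g y)⁻¹ b q) x v
        + fderiv ℝ (fun y => g y a b) x v * (g x)⁻¹ b q)) = 0 := by
      apply Finset.sum_eq_zero
      intro a _
      rw [key a q v, mul_zero]
    simp only [Finset.mul_sum, mul_add, Finset.sum_add_distrib] at H
    have H3 : ∑ a, ∑ b, (g x)⁻¹ c a * (g x a b * fderiv ℝ (fun y => (g y)⁻¹ b q) x v)
        = fderiv ℝ (fun y => (g y)⁻¹ c q) x v := by
      rw [Finset.sum_comm]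
      calc ∑ b, ∑ a, (g x)⁻¹ c a * (g x a b * fderiv ℝ (fun y => (g y)⁻¹ b q) x v)
          = ∑ b, (∑ a, (g x)⁻¹ c a * g x a b) * fderiv ℝ (fun y => (g y)⁻¹ b q) x v := by
            apply Finset.sum_congr rfl
            intro b _
            rw [Finset.sum_mul]
            apply Finset.sum_congr rfl
            intro a _
            ring
        _ = ∑ b, ((g x)⁻¹ * g x) c b * fderiv ℝ (fun y => (g y)⁻¹ b q) x v := by
            simp only [Matrix.mul_apply]
        _ = ∑ b, (1 : Matrix (Fin n) (Fin n) ℝ) c b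
              * fderiv ℝ (fun y => (g y)⁻¹ b q) x v := by
            rw [Matrix.nonsing_inv_mul _ (hg.invertible x hx)]
        _ = fderiv ℝ (fun y => (g y)⁻¹ c q) x v := by
            simp [Matrix.one_apply]
    rw [H3] at H
    linarith
  -- expansion of directional derivative into partials
  have hDg : ∀ (a b : Fin n) (v : Fin n → ℝ),
      fderiv ℝ (fun y => g y a b) x v = ∑ k, v k * pd k (fun y => g y a b) x := by
    intro a b v
    have hv : v = ∑ k, v k • (Pi.single k 1 : Fin n → ℝ) := by
      funext m
      simp [Finset.sum_apply, Pi.single_apply]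
    conv_lhs => rw [hv]
    rw [map_sum]
    simp only [_root_.map_smul, smul_eq_mul]
    rfl
  -- rewrite the vector fields
  have hfn : ∀ q : Fin n, (fun y => (g y)⁻¹ *ᵥ Pi.single q 1)
      = fun y (a : Fin n) => (g y)⁻¹ a q := by
    intro q; funext y a
    rw [Matrix.mulVec_single_one]
    rfl
  have hX : ∀ q : Fin n, ((g x)⁻¹ *ᵥ Pi.single q 1) = fun k => (g x)⁻¹ k q := by
    intro q; funext k
    rw [Matrix.mulVec_single_one]
    rfl
  rw [hfn i, hfn j, hX i, hX j,
    fderiv_pi (fun a => hinv a j), fderiv_pi (fun a => hinv a i)]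
  funext c
  simp only [Pi.sub_apply, ContinuousLinearMap.pi_apply, Pi.zero_apply]
  rw [sub_eq_zero, hsolve, hsolve, neg_inj]
  apply Finset.sum_congr rfl
  intro a _
  simp only [hDg]
  have claim : ∀ p q : Fin n,
      ∑ b, ∑ k, (g x)⁻¹ k p * pd k (fun y => g y a b) x * (g x)⁻¹ b q
        = ∑ b, ∑ k, (g x)⁻¹ k q * pd k (fun y => g y a b) x * (g x)⁻¹ b p := by
    intro p q
    calc ∑ b, ∑ k, (g x)⁻¹ k p * pd k (fun y => g y a b) x * (g x)⁻¹ b q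
        = ∑ b, ∑ k, (g x)⁻¹ k p * pd b (fun y => g y a k) x * (g x)⁻¹ b q := by
          apply Finset.sum_congr rfl
          intro b _
          apply Finset.sum_congr rfl
          intro k _
          rw [hg.cubic_symm x hx a b k]
      _ = ∑ k, ∑ b, (g x)⁻¹ k p * pd b (fun y => g y a k) x * (g x)⁻¹ b q :=
          Finset.sum_comm
      _ = ∑ b, ∑ k, (g x)⁻¹ k q * pd k (fun y => g y a b) x * (g x)⁻¹ b p := by
          apply Finset.sum_congr rfl
          intro b _
          apply Finset.sum_congr rfl
          intro k _
          ring
  have expand : ∀ p q : Fin n,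
      ∑ b, (g x)⁻¹ c a * ((∑ k, (fun k' => (g x)⁻¹ k' p) k * pd k (fun y => g y a b) x)
        * (g x)⁻¹ b q)
      = (g x)⁻¹ c a * ∑ b, ∑ k, (g x)⁻¹ k p * pd k (fun y => g y a b) x * (g x)⁻¹ b q := by
    intro p q
    rw [Finset.mul_sum]
    apply Finset.sum_congr rfl
    intro b _
    rw [Finset.sum_mul]
  rw [expand i j, expand j i, claim i j]
end
end

section
/- Let U ⊆ ℝⁿ be open and g : U → Matrix (Fin n) (Fin n) ℝ a smooth map with g(x) symmetric for all x. Suppose there exist smooth functions f_1, …, f_n : U → ℝ with g_{ij} = ∂_j f_i for all i, j (i.e. each standard coordinate vector field e_i is the g-gradient of the function f_i). Then ∂_k g_{ij} is totally symmetric in (i,j,k); i.e. a pseudo-Riemannian metric whose coordinate vector fields are gradient vector fields is Hessian metric data. -/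
open Matrix

noncomputable section

/-- Auxiliary: `∂_k (∂_j f) x` equals the second derivative applied to `(e_k, e_j)`. -/
lemma pd_pd_eq {n : ℕ} (f : (Fin n → ℝ) → ℝ) (x : Fin n → ℝ)
    (hd : DifferentiableAt ℝ (fderiv ℝ f) x) (j k : Fin n) :
    pd k (fun y => pd j f y) x
      = fderiv ℝ (fderiv ℝ f) x (Pi.single k 1) (Pi.single j 1) := by
  unfold pd
  rw [fderiv_clm_apply hd (differentiableAt_const _)]
  simp

/-- if each coordinate vector field is the `g`-gradient of a function
`f i` (i.e. `g_{ij} = ∂_j f_i`), then `∂_k g_{ij}` is totally symmetric in `(i,j,k)`,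
i.e. `g` is Hessian metric data. -/
theorem stmt_3 {n : ℕ} (hn : 1 ≤ n) (U : Set (Fin n → ℝ)) (hU : IsOpen U)
    (g : (Fin n → ℝ) → Matrix (Fin n) (Fin n) ℝ)
    (hsmooth : ∀ i j, ContDiffOn ℝ (⊤ : ℕ∞) (fun x => g x i j) U)
    (hsymm : ∀ x ∈ U, (g x).IsSymm)
    (f : Fin n → (Fin n → ℝ) → ℝ)
    (hf : ∀ i, ContDiffOn ℝ (⊤ : ℕ∞) (f i) U)
    (hgrad : ∀ x ∈ U, ∀ i j : Fin n, g x i j = pd j (f i) x) :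
    ∀ x ∈ U, ∀ i j k : Fin n,
      pd k (fun y => g y i j) x = pd j (fun y => g y i k) x ∧
      pd k (fun y => g y i j) x = pd k (fun y => g y j i) x := by
  intro x hx i j k
  have hmem : U ∈ nhds x := hU.mem_nhds hx
  have hca : ContDiffAt ℝ (⊤ : ℕ∞) (f i) x := (hf i).contDiffAt hmem
  have hd : DifferentiableAt ℝ (fderiv ℝ (f i)) x := by
    have : ContDiffAt ℝ (⊤ : ℕ∞) (fderiv ℝ (f i)) x := by
      apply ContDiffAt.fderiv_right hca
      exact (by simp)
    exact this.differentiableAt (by simp)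
  have hsymm2 : IsSymmSndFDerivAt ℝ (f i) x := by
    apply hca.isSymmSndFDerivAt
    rw [minSmoothness_of_isRCLikeNormedField]
    exact WithTop.coe_le_coe.mpr (le_top : (2 : ℕ∞) ≤ ⊤)
  have key : ∀ a b : Fin n,
      pd b (fun y => g y i a) x
        = fderiv ℝ (fderiv ℝ (f i)) x (Pi.single b 1) (Pi.single a 1) := by
    intro a b
    have hEq : (fun y => g y i a) =ᶠ[nhds x] fun y => pd a (f i) y :=
      Filter.eventuallyEq_of_mem hmem fun y hy => hgrad y hy i a
    have : pd b (fun y => g y i a) x = pd b (fun y => pd a (f i) y) x := by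
      unfold pd
      rw [hEq.fderiv_eq]
      rfl
    rw [this, pd_pd_eq _ _ hd]
  constructor
  · rw [key j k, key k j, hsymm2]
  · have hEq : (fun y => g y i j) =ᶠ[nhds x] fun y => g y j i := by
      refine Filter.eventuallyEq_of_mem hmem fun y hy => ?_
      have := (hsymm y hy).apply j i
      simpa using this
    unfold pd
    rw [hEq.fderiv_eq]
end
end

section
/- The conjugate connection is flat: setting Γ̄_i(x) := g(x)⁻¹ ∂_i g(x) = 2Ŝ_i(x), the curvature vanishes identically, i.e. ∂_i Γ̄_j − ∂_j Γ̄_i + Γ̄_i Γ̄_j − Γ̄_j Γ̄_i = 0 on U for all i, j. -/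
open Matrix

noncomputable section

section Helpers

variable {n : ℕ}

lemma pd_congr_nhds {i : Fin n} {f f' : (Fin n → ℝ) → ℝ} {x : Fin n → ℝ}
    (h : f =ᶠ[nhds x] f') : pd i f x = pd i f' x := by
  unfold pd
  rw [Filter.EventuallyEq.fderiv_eq h]

lemma pd_sum {i : Fin n} {ι : Type*} (s : Finset ι) {f : ι → (Fin n → ℝ) → ℝ} {x : Fin n → ℝ}
    (h : ∀ c ∈ s, DifferentiableAt ℝ (f c) x) :
    pd i (fun y => ∑ c ∈ s, f c y) x = ∑ c ∈ s, pd i (f c) x := by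
  unfold pd
  rw [fderiv_fun_sum h]
  simp

lemma pd_mul {i : Fin n} {f h : (Fin n → ℝ) → ℝ} {x : Fin n → ℝ}
    (hf : DifferentiableAt ℝ f x) (hh : DifferentiableAt ℝ h x) :
    pd i (fun y => f y * h y) x = pd i f x * h x + f x * pd i h x := by
  unfold pd
  rw [fderiv_fun_mul hf hh]
  simp only [ContinuousLinearMap.add_apply, ContinuousLinearMap.smul_apply, smul_eq_mul]
  ring

lemma contDiffAt_detm {m : WithTop ℕ∞} {A : (Fin n → ℝ) → Matrix (Fin n) (Fin n) ℝ}
    {x : Fin n → ℝ} (h : ∀ a b, ContDiffAt ℝ m (fun y => A y a b) x) :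
    ContDiffAt ℝ m (fun y => (A y).det) x := by
  have hrw : (fun y => (A y).det)
      = fun y => ∑ σ : Equiv.Perm (Fin n),
          ((Equiv.Perm.sign σ : ℤ) : ℝ) * ∏ c, A y (σ c) c := by
    funext y
    simp [Matrix.det_apply, Units.smul_def, zsmul_eq_mul]
  rw [hrw]
  exact ContDiffAt.sum fun σ _ => contDiffAt_const.mul (contDiffAt_prod fun c _ => h _ _)

variable {U : Set (Fin n → ℝ)} {g : (Fin n → ℝ) → Matrix (Fin n) (Fin n) ℝ}
  {x : Fin n → ℝ}

lemma gEntry (hg : HessianData n U g) (hx : x ∈ U) (m : ℕ∞) (a b : Fin n) :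
    ContDiffAt ℝ m (fun y => g y a b) x :=
  ((hg.smooth a b).contDiffAt (hg.isOpen.mem_nhds hx)).of_le (by exact_mod_cast le_top)

lemma pdEntry (hg : HessianData n U g) (hx : x ∈ U) (m : ℕ∞) (k a b : Fin n) :
    ContDiffAt ℝ m (fun y => pd k (fun z => g z a b) y) x := by
  show ContDiffAt ℝ m (fun y => fderiv ℝ (fun z => g z a b) y (Pi.single k 1)) x
  exact ((gEntry hg hx (m + 1) a b).fderiv_right le_rfl).clm_apply contDiffAt_const

lemma detEntry (hg : HessianData n U g) (hx : x ∈ U) (m : ℕ∞) :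
    ContDiffAt ℝ m (fun y => (g y).det) x :=
  contDiffAt_detm (gEntry hg hx m)

lemma adjEntry (hg : HessianData n U g) (hx : x ∈ U) (m : ℕ∞) (a b : Fin n) :
    ContDiffAt ℝ m (fun y => (g y).adjugate a b) x := by
  simp only [Matrix.adjugate_apply]
  apply contDiffAt_detm
  intro c d
  by_cases hcb : c = b
  · simpa [Matrix.updateRow_apply, hcb] using contDiffAt_const (c := (Pi.single a 1 : Fin n → ℝ) d)
  · simpa [Matrix.updateRow_apply, hcb] using gEntry hg hx m c d

lemma invEntry (hg : HessianData n U g) (hx : x ∈ U) (m : ℕ∞) (a b : Fin n) :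
    ContDiffAt ℝ m (fun y => (g y)⁻¹ a b) x := by
  have hrw : (fun y => (g y)⁻¹ a b)
      = fun y => ((g y).det)⁻¹ * (g y).adjugate a b := by
    funext y
    rw [Matrix.inv_def, Ring.inverse_eq_inv', Matrix.smul_apply, smul_eq_mul]
  rw [hrw]
  have hne : (g x).det ≠ 0 := (hg.invertible x hx).ne_zero
  exact ((detEntry hg hx m).inv hne).mul (adjEntry hg hx m a b)

lemma mpd_inv (hg : HessianData n U g) (hx : x ∈ U) (k : Fin n) :
    mpd k (fun y => (g y)⁻¹) x = -((g x)⁻¹ * mpd k g x * (g x)⁻¹) := by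
  have key : mpd k (fun y => (g y)⁻¹) x * g x + (g x)⁻¹ * mpd k g x = 0 := by
    ext a b
    have h0 : pd k (fun y => ∑ c, (g y)⁻¹ a c * g y c b) x = 0 := by
      have : (fun y => ∑ c, (g y)⁻¹ a c * g y c b)
          =ᶠ[nhds x] (fun _ => (1 : Matrix (Fin n) (Fin n) ℝ) a b) := by
        filter_upwards [hg.isOpen.mem_nhds hx] with y hy
        rw [← Matrix.mul_apply, Matrix.nonsing_inv_mul _ (hg.invertible y hy)]
      rw [pd_congr_nhds this]
      simp [pd]
    rw [pd_sum _ (fun c _ =>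
        ((invEntry hg hx 1 a c).differentiableAt one_ne_zero).fun_mul
          ((gEntry hg hx 1 c b).differentiableAt one_ne_zero))] at h0
    have h1 : ∑ c, (pd k (fun y => (g y)⁻¹ a c) x * g x c b
        + (g x)⁻¹ a c * pd k (fun y => g y c b) x) = 0 := by
      rw [← h0]
      exact Finset.sum_congr rfl fun c _ => (pd_mul
        ((invEntry hg hx 1 a c).differentiableAt one_ne_zero)
        ((gEntry hg hx 1 c b).differentiableAt one_ne_zero)).symm
    rw [Finset.sum_add_distrib] at h1
    simpa [Matrix.add_apply, Matrix.mul_apply, mpd, pd] using h1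
  have h2 : mpd k (fun y => (g y)⁻¹) x * g x = -((g x)⁻¹ * mpd k g x) := by
    linear_combination (norm := noncomm_ring) key
  calc mpd k (fun y => (g y)⁻¹) x
      = mpd k (fun y => (g y)⁻¹) x * g x * (g x)⁻¹ := by
        rw [Matrix.mul_nonsing_inv_cancel_right _ _ (hg.invertible x hx)]
    _ = -((g x)⁻¹ * mpd k g x * (g x)⁻¹) := by rw [h2]; noncomm_ring

lemma mpd_gamma (hg : HessianData n U g) (hx : x ∈ U) (i j : Fin n) :
    mpd i (fun y => (g y)⁻¹ * mpd j g y) x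
      = -((g x)⁻¹ * mpd i g x * ((g x)⁻¹ * mpd j g x))
        + (g x)⁻¹ * Matrix.of (fun a b => pd i (fun y => pd j (fun z => g z a b) y) x) := by
  have step : mpd i (fun y => (g y)⁻¹ * mpd j g y) x
      = mpd i (fun y => (g y)⁻¹) x * mpd j g x
        + (g x)⁻¹ * Matrix.of (fun a b => pd i (fun y => pd j (fun z => g z a b) y) x) := by
    ext a b
    have hfun : (fun y => ((g y)⁻¹ * mpd j g y) a b)
        = fun y => ∑ c, (g y)⁻¹ a c * pd j (fun z => g z c b) y := by
      funext y
      simp [Matrix.mul_apply, mpd]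
    show pd i (fun y => ((g y)⁻¹ * mpd j g y) a b) x = _
    rw [hfun, pd_sum _ (fun c _ =>
        ((invEntry hg hx 1 a c).differentiableAt one_ne_zero).fun_mul
          ((pdEntry hg hx 1 j c b).differentiableAt one_ne_zero))]
    have : ∑ c, pd i (fun y => (g y)⁻¹ a c * pd j (fun z => g z c b) y) x
        = ∑ c, (pd i (fun y => (g y)⁻¹ a c) x * pd j (fun z => g z c b) x
            + (g x)⁻¹ a c * pd i (fun y => pd j (fun z => g z c b) y) x) :=
      Finset.sum_congr rfl fun c _ => pd_mul
        ((invEntry hg hx 1 a c).differentiableAt one_ne_zero)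
        ((pdEntry hg hx 1 j c b).differentiableAt one_ne_zero)
    rw [this, Finset.sum_add_distrib]
    simp [Matrix.add_apply, Matrix.mul_apply, mpd]
  rw [step, mpd_inv hg hx i]
  noncomm_ring

lemma pd_pd_symm (hg : HessianData n U g) (hx : x ∈ U) (i j a b : Fin n) :
    pd i (fun y => pd j (fun z => g z a b) y) x
      = pd j (fun y => pd i (fun z => g z a b) y) x := by
  set f := fun z => g z a b with hf
  have hc : ContDiffAt ℝ 2 f x := gEntry hg hx 2 a b
  have hd : DifferentiableAt ℝ (fderiv ℝ f) x :=
    (hc.fderiv_right (m := 1) (by norm_num)).differentiableAt one_ne_zero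
  have hred : ∀ v w : Fin n → ℝ,
      fderiv ℝ (fun y => fderiv ℝ f y w) x v = fderiv ℝ (fderiv ℝ f) x v w := by
    intro v w
    rw [fderiv_clm_apply hd (differentiableAt_const w)]
    simp
  have hsymm := hc.isSymmSndFDerivAt (by simp [minSmoothness_of_isRCLikeNormedField])
  show fderiv ℝ (fun y => fderiv ℝ f y (Pi.single j 1)) x (Pi.single i 1)
      = fderiv ℝ (fun y => fderiv ℝ f y (Pi.single i 1)) x (Pi.single j 1)
  rw [hred, hred]
  exact hsymm _ _

end Helpers

/-- the conjugate connection, with Christoffel symbols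
`Γ̄ᵢ = g⁻¹ ∂ᵢg = 2Ŝᵢ`, is flat. -/
theorem stmt_5 {n : ℕ} (hn : 1 ≤ n) (U : Set (Fin n → ℝ))
    (g : (Fin n → ℝ) → Matrix (Fin n) (Fin n) ℝ)
    (hg : HessianData n U g) :
    ∀ x ∈ U, ∀ i j : Fin n,
      mpd i (fun y => (g y)⁻¹ * mpd j g y) x - mpd j (fun y => (g y)⁻¹ * mpd i g y) x
        + ((g x)⁻¹ * mpd i g x) * ((g x)⁻¹ * mpd j g x)
        - ((g x)⁻¹ * mpd j g x) * ((g x)⁻¹ * mpd i g x) = 0 := by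
  intro x hx i j
  rw [mpd_gamma hg hx i j, mpd_gamma hg hx j i]
  have hH : Matrix.of (fun a b => pd i (fun y => pd j (fun z => g z a b) y) x)
      = Matrix.of (fun a b => pd j (fun y => pd i (fun z => g z a b) y) x) := by
    ext a b
    exact pd_pd_symm hg hx i j a b
  rw [hH]
  abel
end
end

section
/- The Kähler form ω is closed: for every p ∈ N and all constant vectors ξ₁, ξ₂, ξ₃ ∈ ℝ^{2n}, the cyclic sum (D_{ξ₁}ω)_p(ξ₂,ξ₃) + (D_{ξ₂}ω)_p(ξ₃,ξ₁) + (D_{ξ₃}ω)_p(ξ₁,ξ₂) = 0, where D is the Fréchet derivative of the map p ↦ ω_p. Moreover G(J·, J·) = G and ω(J·, J·) = ω; hence (N, G, J) is a pseudo-Kähler manifold. -/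
open Matrix

noncomputable section

/-- The metric `G` on `N = U × ℝⁿ` as a bilinear form on tangent vectors
`ξ = (v,w) ∈ ℝⁿ × ℝⁿ`: `G((v,w),(v',w')) = ⟨g v, v'⟩ + ⟨g w, w'⟩`. -/
def Gbil {n : ℕ} (g : (Fin n → ℝ) → Matrix (Fin n) (Fin n) ℝ)
    (p ξ η : (Fin n → ℝ) × (Fin n → ℝ)) : ℝ :=
  (g p.1 *ᵥ ξ.1) ⬝ᵥ η.1 + (g p.1 *ᵥ ξ.2) ⬝ᵥ η.2

/-- The complex structure `J(v,w) = (−w, v)` on `ℝⁿ × ℝⁿ`. -/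
def Jmap {n : ℕ} (ξ : (Fin n → ℝ) × (Fin n → ℝ)) : (Fin n → ℝ) × (Fin n → ℝ) :=
  (-ξ.2, ξ.1)

/-- The Kähler form `ω = G(J·,·)`:
`ω((v,w),(v',w')) = ⟨g v, w'⟩ − ⟨g v', w⟩`. -/
def omegaN {n : ℕ} (g : (Fin n → ℝ) → Matrix (Fin n) (Fin n) ℝ)
    (p ξ η : (Fin n → ℝ) × (Fin n → ℝ)) : ℝ :=
  (g p.1 *ᵥ ξ.1) ⬝ᵥ η.2 - (g p.1 *ᵥ η.1) ⬝ᵥ ξ.2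


section Aux7

private lemma antisym_sum' {n : ℕ} (F : Fin n → Fin n → ℝ) (h : ∀ j k, F j k = - F k j) :
    ∑ j, ∑ k, F j k = 0 := by
  have h2 : ∑ j, ∑ k, F j k = - ∑ j, ∑ k, F j k := by
    conv_lhs => rw [Finset.sum_comm]
    rw [Finset.sum_congr rfl fun k _ => Finset.sum_congr rfl fun j _ => h j k]
    simp
  linarith

private lemma cancel' {n : ℕ} (S : Fin n → Fin n → Fin n → ℝ)
    (hS : ∀ i j k, S i j k = S i k j)
    (a b c : (Fin n → ℝ) × (Fin n → ℝ)) :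
    (∑ i, ∑ j, (∑ k, a.1 k * S i j k) * (b.1 j * c.2 i - c.1 j * b.2 i))
    + (∑ i, ∑ j, (∑ k, b.1 k * S i j k) * (c.1 j * a.2 i - a.1 j * c.2 i))
    + (∑ i, ∑ j, (∑ k, c.1 k * S i j k) * (a.1 j * b.2 i - b.1 j * a.2 i)) = 0 := by
  rw [← Finset.sum_add_distrib, ← Finset.sum_add_distrib]
  refine Finset.sum_eq_zero fun i _ => ?_
  rw [← Finset.sum_add_distrib, ← Finset.sum_add_distrib]
  simp only [Finset.sum_mul, ← Finset.sum_add_distrib]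
  apply antisym_sum'
  intro j k
  rw [hS i j k]
  ring

private lemma clm_eq_sum' {n : ℕ} (f : (Fin n → ℝ) →L[ℝ] ℝ) (v : Fin n → ℝ) :
    f v = ∑ k, v k * f (Pi.single k 1) := by
  have hv : v = ∑ k, v k • (Pi.single k 1 : Fin n → ℝ) := by
    funext j
    simp [Finset.sum_apply, Pi.single_apply]
  conv_lhs => rw [hv]
  simp [smul_eq_mul]

private lemma symdot' {n : ℕ} {A : Matrix (Fin n) (Fin n) ℝ} (h : A.IsSymm)
    (a b : Fin n → ℝ) : (A *ᵥ a) ⬝ᵥ b = (A *ᵥ b) ⬝ᵥ a := by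
  simp only [dotProduct, mulVec, Finset.sum_mul]
  rw [Finset.sum_comm]
  refine Finset.sum_congr rfl fun j _ => Finset.sum_congr rfl fun i _ => ?_
  rw [← h.apply i j]
  ring

private lemma omega_expand' {n : ℕ} (g : (Fin n → ℝ) → Matrix (Fin n) (Fin n) ℝ)
    (q ξ η : (Fin n → ℝ) × (Fin n → ℝ)) :
    omegaN g q ξ η = ∑ i, ∑ j, g q.1 i j * (ξ.1 j * η.2 i - η.1 j * ξ.2 i) := by
  simp only [omegaN, dotProduct, mulVec, Finset.sum_mul, mul_sub, ← Finset.sum_sub_distrib]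
  refine Finset.sum_congr rfl fun i _ => Finset.sum_congr rfl fun j _ => ?_
  ring

private lemma entry_diff' {n : ℕ} {U : Set (Fin n → ℝ)}
    {g : (Fin n → ℝ) → Matrix (Fin n) (Fin n) ℝ} (hg : HessianData n U g)
    {x : Fin n → ℝ} (hx : x ∈ U) (i j : Fin n) :
    DifferentiableAt ℝ (fun y => g y i j) x :=
  (((hg.smooth i j).differentiableOn (by simp)) x hx).differentiableAt
    (hg.isOpen.mem_nhds hx)

private lemma omega_fderiv' {n : ℕ} {U : Set (Fin n → ℝ)}
    {g : (Fin n → ℝ) → Matrix (Fin n) (Fin n) ℝ} (hg : HessianData n U g)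
    {p : (Fin n → ℝ) × (Fin n → ℝ)} (hp : p.1 ∈ U)
    (ξ η ζ : (Fin n → ℝ) × (Fin n → ℝ)) :
    fderiv ℝ (fun q => omegaN g q ξ η) p ζ
      = ∑ i, ∑ j, (∑ k, ζ.1 k * pd k (fun y => g y i j) p.1)
          * (ξ.1 j * η.2 i - η.1 j * ξ.2 i) := by
  have hL : HasFDerivAt (fun q : (Fin n → ℝ) × (Fin n → ℝ) =>
        ∑ i, ∑ j, g q.1 i j * (ξ.1 j * η.2 i - η.1 j * ξ.2 i))
      (∑ i, ∑ j, (ξ.1 j * η.2 i - η.1 j * ξ.2 i) •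
        ((fderiv ℝ (fun x => g x i j) p.1).comp
          (ContinuousLinearMap.fst ℝ (Fin n → ℝ) (Fin n → ℝ)))) p := by
    refine HasFDerivAt.fun_sum fun i _ => HasFDerivAt.fun_sum fun j _ => ?_
    exact (((entry_diff' hg hp i j).hasFDerivAt).comp p (hasFDerivAt_fst)).mul_const _
  have heq : (fun q : (Fin n → ℝ) × (Fin n → ℝ) => omegaN g q ξ η)
      = fun q => ∑ i, ∑ j, g q.1 i j * (ξ.1 j * η.2 i - η.1 j * ξ.2 i) := by
    funext q; exact omega_expand' g q ξ η
  rw [heq, hL.fderiv]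
  simp only [ContinuousLinearMap.coe_sum', Finset.sum_apply,
    ContinuousLinearMap.coe_smul', Pi.smul_apply, ContinuousLinearMap.coe_comp',
    Function.comp_apply, ContinuousLinearMap.coe_fst', smul_eq_mul]
  refine Finset.sum_congr rfl fun i _ => Finset.sum_congr rfl fun j _ => ?_
  rw [clm_eq_sum' (fderiv ℝ (fun x => g x i j) p.1) ζ.1]
  simp only [pd]
  ring

end Aux7

/-- for Hessian metric data the Kähler form `ω` on `N = U × ℝⁿ` is
closed, and `G` and `ω` are `J`-invariant; hence `(N,G,J)` is pseudo-Kähler. -/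
theorem stmt_7 {n : ℕ} (hn : 1 ≤ n) (U : Set (Fin n → ℝ))
    (g : (Fin n → ℝ) → Matrix (Fin n) (Fin n) ℝ)
    (hg : HessianData n U g) :
    ∀ p ∈ U ×ˢ (Set.univ : Set (Fin n → ℝ)),
      (∀ ξ₁ ξ₂ ξ₃ : (Fin n → ℝ) × (Fin n → ℝ),
        fderiv ℝ (fun q => omegaN g q ξ₂ ξ₃) p ξ₁
          + fderiv ℝ (fun q => omegaN g q ξ₃ ξ₁) p ξ₂
          + fderiv ℝ (fun q => omegaN g q ξ₁ ξ₂) p ξ₃ = 0) ∧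
      (∀ ξ η : (Fin n → ℝ) × (Fin n → ℝ),
        Gbil g p (Jmap ξ) (Jmap η) = Gbil g p ξ η ∧
        omegaN g p (Jmap ξ) (Jmap η) = omegaN g p ξ η) := by
  rintro p ⟨hpU, -⟩
  constructor
  · intro ξ₁ ξ₂ ξ₃
    rw [omega_fderiv' hg hpU ξ₂ ξ₃ ξ₁, omega_fderiv' hg hpU ξ₃ ξ₁ ξ₂,
      omega_fderiv' hg hpU ξ₁ ξ₂ ξ₃]
    exact cancel' (fun i j k => pd k (fun y => g y i j) p.1)
      (fun i j k => hg.cubic_symm p.1 hpU i j k) ξ₁ ξ₂ ξ₃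
  · intro ξ η
    have hsymm := hg.symm p.1 hpU
    constructor
    · simp only [Gbil, Jmap, Matrix.mulVec_neg, neg_dotProduct,
        dotProduct_neg, neg_neg]
      ring
    · simp only [omegaN, Jmap, Matrix.mulVec_neg, neg_dotProduct]
      rw [symdot' hsymm ξ.2 η.1, symdot' hsymm η.2 ξ.1]
      ring
end
end

section
/- The 2n matrix-valued functions Γ_i := blockdiag(Ŝ_i, Ŝ_i) and Γ_{i'} := [[0, −Ŝ_i],[Ŝ_i, 0]] (i = 1,…,n) are the Christoffel symbols of the Levi-Civita connection of G on N: they are torsion-free (Γ_I e_J = Γ_J e_I for all I, J ∈ {1,…,2n}, where e_J is the standard basis of ℝ^{2n}) and metric for G (∂_I G = Γ_Iᵀ G + G Γ_I for all I). -/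
open Matrix

noncomputable section

/-- The `I`-th standard basis vector of `ℝ^{2n} = ℝⁿ × ℝⁿ`, indexed by `Fin n ⊕ Fin n`
(horizontal indices `inl i`, vertical indices `inr i'`). -/
def eN {n : ℕ} : Fin n ⊕ Fin n → (Fin n → ℝ) × (Fin n → ℝ)
  | .inl i => (Pi.single i 1, 0)
  | .inr i => (0, Pi.single i 1)

/-- Partial derivative on `N ⊆ ℝ^{2n}` in the `I`-th coordinate direction. -/
def pdN {n : ℕ} (I : Fin n ⊕ Fin n) (f : (Fin n → ℝ) × (Fin n → ℝ) → ℝ)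
    (p : (Fin n → ℝ) × (Fin n → ℝ)) : ℝ :=
  fderiv ℝ f p (eN I)

/-- Entrywise partial derivative of a matrix-valued map on `N ⊆ ℝ^{2n}`. -/
def mpdN {n : ℕ} (I : Fin n ⊕ Fin n)
    (F : (Fin n → ℝ) × (Fin n → ℝ) → Matrix (Fin n ⊕ Fin n) (Fin n ⊕ Fin n) ℝ)
    (p : (Fin n → ℝ) × (Fin n → ℝ)) : Matrix (Fin n ⊕ Fin n) (Fin n ⊕ Fin n) ℝ :=
  Matrix.of fun A B => pdN I (fun q => F q A B) p

/-- The metric `G(x,u) = blockdiag(g(x), g(x))` on `N = U × ℝⁿ`. -/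
def GN {n : ℕ} (g : (Fin n → ℝ) → Matrix (Fin n) (Fin n) ℝ)
    (p : (Fin n → ℝ) × (Fin n → ℝ)) : Matrix (Fin n ⊕ Fin n) (Fin n ⊕ Fin n) ℝ :=
  Matrix.fromBlocks (g p.1) 0 0 (g p.1)

/-- Curvature `R_{IJ} = ∂_I Γ_J − ∂_J Γ_I + Γ_I Γ_J − Γ_J Γ_I` of a connection on `N`
given by Christoffel symbols `Γ`. -/
def Riem {n : ℕ}
    (Γ : Fin n ⊕ Fin n → (Fin n → ℝ) × (Fin n → ℝ) → Matrix (Fin n ⊕ Fin n) (Fin n ⊕ Fin n) ℝ)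
    (I J : Fin n ⊕ Fin n) (p : (Fin n → ℝ) × (Fin n → ℝ)) :
    Matrix (Fin n ⊕ Fin n) (Fin n ⊕ Fin n) ℝ :=
  mpdN I (Γ J) p - mpdN J (Γ I) p + Γ I p * Γ J p - Γ J p * Γ I p

/-- Christoffel symbols of the Levi-Civita connection of `G` on `N`:
`Γ_i = blockdiag(Ŝᵢ, Ŝᵢ)`, `Γ_{i'} = [[0, −Ŝᵢ],[Ŝᵢ, 0]]`. -/
def GammaLC {n : ℕ} (g : (Fin n → ℝ) → Matrix (Fin n) (Fin n) ℝ) :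
    Fin n ⊕ Fin n → (Fin n → ℝ) × (Fin n → ℝ) → Matrix (Fin n ⊕ Fin n) (Fin n ⊕ Fin n) ℝ
  | .inl i => fun p => Matrix.fromBlocks (Shat g i p.1) 0 0 (Shat g i p.1)
  | .inr i => fun p => Matrix.fromBlocks 0 (-(Shat g i p.1)) (Shat g i p.1) 0

section Aux

variable {n : ℕ} {U : Set (Fin n → ℝ)} {g : (Fin n → ℝ) → Matrix (Fin n) (Fin n) ℝ}

lemma HessianData.diffAt (hg : HessianData n U g) {x : Fin n → ℝ} (hx : x ∈ U) (a b : Fin n) :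
    DifferentiableAt ℝ (fun y => g y a b) x :=
  ((hg.smooth a b).differentiableOn (by simp)).differentiableAt (hg.isOpen.mem_nhds hx)

lemma HessianData.pd_symm (hg : HessianData n U g) {x : Fin n → ℝ} (hx : x ∈ U) (i a b : Fin n) :
    pd i (fun y => g y a b) x = pd i (fun y => g y b a) x := by
  unfold pd
  congr 1
  apply Filter.EventuallyEq.fderiv_eq
  filter_upwards [hg.isOpen.mem_nhds hx] with y hy
  exact ((hg.symm y hy).apply a b).symm

lemma HessianData.mpd_symm (hg : HessianData n U g) {x : Fin n → ℝ} (hx : x ∈ U) (i : Fin n) :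
    (mpd i g x)ᵀ = mpd i g x := by
  ext a b
  simp only [Matrix.transpose_apply, mpd, Matrix.of_apply]
  exact hg.pd_symm hx i b a

lemma HessianData.ginv_symm (hg : HessianData n U g) {x : Fin n → ℝ} (hx : x ∈ U) :
    ((g x)⁻¹)ᵀ = (g x)⁻¹ := by
  rw [Matrix.transpose_nonsing_inv, (hg.symm x hx).eq]

lemma HessianData.ShatT_mul (hg : HessianData n U g) {x : Fin n → ℝ} (hx : x ∈ U) (i : Fin n) :
    (Shat g i x)ᵀ * g x = (2⁻¹ : ℝ) • mpd i g x := by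
  unfold Shat
  rw [Matrix.transpose_smul, Matrix.transpose_mul, hg.mpd_symm hx, hg.ginv_symm hx,
    Matrix.smul_mul, Matrix.mul_assoc, Matrix.nonsing_inv_mul _ (hg.invertible x hx),
    Matrix.mul_one]

lemma HessianData.mul_Shat (hg : HessianData n U g) {x : Fin n → ℝ} (hx : x ∈ U) (i : Fin n) :
    g x * Shat g i x = (2⁻¹ : ℝ) • mpd i g x := by
  unfold Shat
  rw [Matrix.mul_smul, ← Matrix.mul_assoc, Matrix.mul_nonsing_inv _ (hg.invertible x hx),
    Matrix.one_mul]

lemma HessianData.Shat_apply_symm (hg : HessianData n U g) {x : Fin n → ℝ} (hx : x ∈ U)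
    (i j a : Fin n) : Shat g i x a j = Shat g j x a i := by
  unfold Shat
  simp only [Matrix.smul_apply, Matrix.mul_apply, smul_eq_mul]
  congr 1
  refine Finset.sum_congr rfl fun b _ => ?_
  congr 1
  exact hg.cubic_symm x hx b j i

lemma HessianData.pdN_inl (hg : HessianData n U g) {p : (Fin n → ℝ) × (Fin n → ℝ)} (hp : p.1 ∈ U)
    (a b i : Fin n) :
    pdN (.inl i) (fun q : (Fin n → ℝ) × (Fin n → ℝ) => g q.1 a b) p
      = pd i (fun y => g y a b) p.1 := by
  have h : HasFDerivAt (fun q : (Fin n → ℝ) × (Fin n → ℝ) => g q.1 a b)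
      ((fderiv ℝ (fun y => g y a b) p.1).comp
        (ContinuousLinearMap.fst ℝ (Fin n → ℝ) (Fin n → ℝ))) p :=
    ((hg.diffAt hp a b).hasFDerivAt).comp p (hasFDerivAt_fst)
  unfold pdN pd
  rw [h.fderiv]
  simp [eN]

lemma HessianData.pdN_inr (hg : HessianData n U g) {p : (Fin n → ℝ) × (Fin n → ℝ)} (hp : p.1 ∈ U)
    (a b i : Fin n) :
    pdN (.inr i) (fun q : (Fin n → ℝ) × (Fin n → ℝ) => g q.1 a b) p = 0 := by
  have h : HasFDerivAt (fun q : (Fin n → ℝ) × (Fin n → ℝ) => g q.1 a b)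
      ((fderiv ℝ (fun y => g y a b) p.1).comp
        (ContinuousLinearMap.fst ℝ (Fin n → ℝ) (Fin n → ℝ))) p :=
    ((hg.diffAt hp a b).hasFDerivAt).comp p (hasFDerivAt_fst)
  unfold pdN
  rw [h.fderiv]
  simp [eN]

lemma HessianData.mpdN_GN_inl (hg : HessianData n U g) {p : (Fin n → ℝ) × (Fin n → ℝ)}
    (hp : p.1 ∈ U) (i : Fin n) :
    mpdN (.inl i) (GN g) p = Matrix.fromBlocks (mpd i g p.1) 0 0 (mpd i g p.1) := by
  ext A B
  cases A with
  | inl a => cases B with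
    | inl b =>
      simp only [mpdN, GN, Matrix.of_apply, Matrix.fromBlocks_apply₁₁, mpd]
      exact hg.pdN_inl hp a b i
    | inr b =>
      simp only [mpdN, GN, Matrix.of_apply, Matrix.fromBlocks_apply₁₂, Matrix.zero_apply]
      simp [pdN]
  | inr a => cases B with
    | inl b =>
      simp only [mpdN, GN, Matrix.of_apply, Matrix.fromBlocks_apply₂₁, Matrix.zero_apply]
      simp [pdN]
    | inr b =>
      simp only [mpdN, GN, Matrix.of_apply, Matrix.fromBlocks_apply₂₂, mpd]
      exact hg.pdN_inl hp a b i

lemma HessianData.mpdN_GN_inr (hg : HessianData n U g) {p : (Fin n → ℝ) × (Fin n → ℝ)}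
    (hp : p.1 ∈ U) (i : Fin n) :
    mpdN (.inr i) (GN g) p = 0 := by
  ext A B
  cases A with
  | inl a => cases B with
    | inl b =>
      simp only [mpdN, GN, Matrix.of_apply, Matrix.fromBlocks_apply₁₁, Matrix.zero_apply]
      exact hg.pdN_inr hp a b i
    | inr b =>
      simp only [mpdN, GN, Matrix.of_apply, Matrix.fromBlocks_apply₁₂, Matrix.zero_apply]
      simp [pdN]
  | inr a => cases B with
    | inl b =>
      simp only [mpdN, GN, Matrix.of_apply, Matrix.fromBlocks_apply₂₁, Matrix.zero_apply]
      simp [pdN]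
    | inr b =>
      simp only [mpdN, GN, Matrix.of_apply, Matrix.fromBlocks_apply₂₂, Matrix.zero_apply]
      exact hg.pdN_inr hp a b i

end Aux

/-- the matrices `Γ_i = blockdiag(Ŝᵢ,Ŝᵢ)`, `Γ_{i'} = [[0,−Ŝᵢ],[Ŝᵢ,0]]`
are the Christoffel symbols of the Levi-Civita connection of `G` on `N`:
they are torsion-free and metric for `G`. -/
theorem stmt_8 {n : ℕ} (hn : 1 ≤ n) (U : Set (Fin n → ℝ))
    (g : (Fin n → ℝ) → Matrix (Fin n) (Fin n) ℝ)
    (hg : HessianData n U g) :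
    ∀ p ∈ U ×ˢ (Set.univ : Set (Fin n → ℝ)),
      (∀ I J : Fin n ⊕ Fin n,
        GammaLC g I p *ᵥ Pi.single J 1 = GammaLC g J p *ᵥ Pi.single I 1) ∧
      (∀ I : Fin n ⊕ Fin n,
        mpdN I (GN g) p = (GammaLC g I p)ᵀ * GN g p + GN g p * GammaLC g I p) := by
  rintro p hp
  have hp1 : p.1 ∈ U := hp.1
  constructor
  · intro I J
    funext A
    rw [Matrix.mulVec_single, Matrix.mulVec_single]
    simp only [Pi.smul_apply, Matrix.col_apply, MulOpposite.op_one, one_smul]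
    cases I with
    | inl i => cases J with
      | inl j =>
        cases A <;>
          simp only [GammaLC, Matrix.fromBlocks_apply₁₁, Matrix.fromBlocks_apply₂₁,
            Matrix.zero_apply] <;>
          first
            | rfl
            | exact hg.Shat_apply_symm hp1 i j _
      | inr j =>
        cases A <;>
          simp only [GammaLC, Matrix.fromBlocks_apply₁₂, Matrix.fromBlocks_apply₁₁,
            Matrix.fromBlocks_apply₂₂, Matrix.fromBlocks_apply₂₁, Matrix.zero_apply]
        exact hg.Shat_apply_symm hp1 i j _
    | inr i => cases J with
      | inl j =>
        cases A <;>
          simp only [GammaLC, Matrix.fromBlocks_apply₁₂, Matrix.fromBlocks_apply₁₁,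
            Matrix.fromBlocks_apply₂₂, Matrix.fromBlocks_apply₂₁, Matrix.zero_apply]
        exact (hg.Shat_apply_symm hp1 j i _).symm
      | inr j =>
        cases A <;>
          simp only [GammaLC, Matrix.fromBlocks_apply₁₂, Matrix.fromBlocks_apply₂₂,
            Matrix.fromBlocks_apply₂₁, Matrix.neg_apply, Matrix.zero_apply]
        exact congrArg Neg.neg (hg.Shat_apply_symm hp1 i j _)
  · intro I
    cases I with
    | inl i =>
      rw [hg.mpdN_GN_inl hp1 i]
      simp only [GammaLC, GN, Matrix.fromBlocks_transpose, Matrix.transpose_zero,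
        Matrix.fromBlocks_multiply, Matrix.fromBlocks_add]
      rw [hg.ShatT_mul hp1 i, hg.mul_Shat hp1 i]
      simp only [Matrix.mul_zero, Matrix.zero_mul, add_zero, zero_add, ← add_smul]
      norm_num
    | inr i =>
      rw [hg.mpdN_GN_inr hp1 i]
      simp only [GammaLC, GN, Matrix.fromBlocks_transpose, Matrix.transpose_zero,
        Matrix.transpose_neg, Matrix.fromBlocks_multiply, Matrix.fromBlocks_add,
        Matrix.neg_mul, Matrix.mul_neg]
      rw [hg.ShatT_mul hp1 i, hg.mul_Shat hp1 i]
      simp [← Matrix.fromBlocks_zero]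
end
end

section
/- Assume the data is special real (∂g constant, so the Ŝ_i depend on x only through g). With Γ_i := blockdiag(Ŝ_i, Ŝ_i), Γ_{i'} := [[0, −Ŝ_i],[Ŝ_i, 0]], the Levi-Civita curvature R_{IJ} := ∂_I Γ_J − ∂_J Γ_I + Γ_I Γ_J − Γ_J Γ_I of G satisfies: R_{ij} = R_{i'j'} = blockdiag(−[Ŝ_i,Ŝ_j], −[Ŝ_i,Ŝ_j]) and R_{ij'} = [[0, Ŝ_iŜ_j + Ŝ_jŜ_i],[−(Ŝ_iŜ_j + Ŝ_jŜ_i), 0]], where [A,B] = AB − BA. -/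
open Matrix

noncomputable section

/-- Special real data on `U ⊆ ℝⁿ`: a symmetric invertible matrix-valued map of the
affine form `g_{ij}(x) = b_{ij} + Σ_k a_{ijk} x^k` with `b` symmetric and `a`
totally symmetric. -/
structure SpecialRealData (n : ℕ) (U : Set (Fin n → ℝ))
    (g : (Fin n → ℝ) → Matrix (Fin n) (Fin n) ℝ) : Prop where
  isOpen : IsOpen U
  smooth : ∀ i j, ContDiffOn ℝ (⊤ : ℕ∞) (fun x => g x i j) U
  symm : ∀ x ∈ U, (g x).IsSymm
  invertible : ∀ x ∈ U, IsUnit (g x).det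
  affine : ∃ (b : Matrix (Fin n) (Fin n) ℝ) (a : Fin n → Fin n → Fin n → ℝ),
    b.IsSymm ∧ (∀ i j k, a i j k = a j i k) ∧ (∀ i j k, a i j k = a i k j) ∧
    ∀ (x : Fin n → ℝ) (i j : Fin n), g x i j = b i j + ∑ k, a i j k * x k

section Aux

open ContinuousLinearMap

attribute [local instance] Matrix.linftyOpNormedRing Matrix.linftyOpNormedAlgebra

variable {n : ℕ}

/-- The constant matrix `∂_k g` for an affine `g`. -/
def Amat (aa : Fin n → Fin n → Fin n → ℝ) (k : Fin n) : Matrix (Fin n) (Fin n) ℝ :=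
  Matrix.of fun p q => aa p q k

/-- The derivative of an affine `g`, as a linear map. -/
def Alin (aa : Fin n → Fin n → Fin n → ℝ) :
    (Fin n → ℝ) →ₗ[ℝ] Matrix (Fin n) (Fin n) ℝ where
  toFun v := Matrix.of fun p q => ∑ k, aa p q k * v k
  map_add' u v := by
    ext p q
    simp [Matrix.add_apply, mul_add, Finset.sum_add_distrib]
  map_smul' c v := by
    ext p q
    simp [Matrix.smul_apply, Finset.mul_sum, smul_eq_mul, mul_left_comm]

/-- The derivative of an affine `g`, as a continuous linear map. -/
def Aclm (aa : Fin n → Fin n → Fin n → ℝ) :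
    (Fin n → ℝ) →L[ℝ] Matrix (Fin n) (Fin n) ℝ :=
  LinearMap.toContinuousLinearMap (Alin aa)

lemma Aclm_single (aa : Fin n → Fin n → Fin n → ℝ) (i : Fin n) :
    Aclm aa (Pi.single i 1) = Amat aa i := by
  ext p q
  simp [Aclm, Alin, Amat, Pi.single_apply, mul_ite]

/-- Affine form of `g`. -/
def IsAff (g : (Fin n → ℝ) → Matrix (Fin n) (Fin n) ℝ)
    (b : Matrix (Fin n) (Fin n) ℝ) (aa : Fin n → Fin n → Fin n → ℝ) : Prop :=
  ∀ (x : Fin n → ℝ) (i j : Fin n), g x i j = b i j + ∑ k, aa i j k * x k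

variable {g : (Fin n → ℝ) → Matrix (Fin n) (Fin n) ℝ}
  {b : Matrix (Fin n) (Fin n) ℝ} {aa : Fin n → Fin n → Fin n → ℝ}

lemma g_eq (haff : IsAff g b aa) : g = fun y => b + Alin aa y := by
  funext y
  ext p q
  simp [haff y p q, Alin, Matrix.add_apply]

lemma hasFDerivAt_g (haff : IsAff g b aa) (x : Fin n → ℝ) :
    HasFDerivAt g (Aclm aa) x := by
  rw [g_eq haff]
  exact (Aclm aa).hasFDerivAt.const_add b

lemma entry_hasFDerivAt {F : (Fin n → ℝ) → Matrix (Fin n) (Fin n) ℝ}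
    {F' : (Fin n → ℝ) →L[ℝ] Matrix (Fin n) (Fin n) ℝ} {x : Fin n → ℝ}
    (h : HasFDerivAt F F' x) (a c : Fin n) :
    HasFDerivAt (fun y => F y a c)
      ((LinearMap.toContinuousLinearMap (Matrix.entryLinearMap ℝ ℝ a c)).comp F') x :=
  (LinearMap.toContinuousLinearMap (Matrix.entryLinearMap ℝ ℝ a c)).hasFDerivAt.comp x h

lemma pd_entry {F : (Fin n → ℝ) → Matrix (Fin n) (Fin n) ℝ}
    {F' : (Fin n → ℝ) →L[ℝ] Matrix (Fin n) (Fin n) ℝ} {x : Fin n → ℝ}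
    (h : HasFDerivAt F F' x) (i a c : Fin n) :
    pd i (fun y => F y a c) x = F' (Pi.single i 1) a c := by
  rw [pd, (entry_hasFDerivAt h a c).fderiv]
  rfl

lemma mpd_g (haff : IsAff g b aa) (x : Fin n → ℝ) (k : Fin n) :
    mpd k g x = Amat aa k := by
  ext p q
  show pd k (fun y => g y p q) x = _
  rw [pd_entry (hasFDerivAt_g haff x) k p q, Aclm_single]

lemma shat_eq (haff : IsAff g b aa) (j : Fin n) (y : Fin n → ℝ) :
    Shat g j y = (2⁻¹ : ℝ) • ((g y)⁻¹ * Amat aa j) := by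
  rw [Shat, mpd_g haff]

lemma shat_hasDeriv (haff : IsAff g b aa) {x : Fin n → ℝ} (hu : IsUnit (g x)) (j : Fin n) :
    ∃ S' : (Fin n → ℝ) →L[ℝ] Matrix (Fin n) (Fin n) ℝ,
      HasFDerivAt (Shat g j) S' x ∧
      ∀ i, S' (Pi.single i 1) = (-2 : ℝ) • (Shat g i x * Shat g j x) := by
  have hgu : ((hu.unit⁻¹ : (Matrix (Fin n) (Fin n) ℝ)ˣ) : Matrix (Fin n) (Fin n) ℝ)
      = (g x)⁻¹ := by
    rw [Matrix.coe_units_inv, hu.unit_spec]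
  have hinv : HasFDerivAt (fun y => (g y)⁻¹)
      (((-mulLeftRight ℝ (Matrix (Fin n) (Fin n) ℝ) ↑hu.unit⁻¹ ↑hu.unit⁻¹)).comp (Aclm aa)) x := by
    have h1 := hasFDerivAt_ringInverse (𝕜 := ℝ) hu.unit
    rw [hu.unit_spec] at h1
    have h2 := h1.comp x (hasFDerivAt_g haff x)
    have hfun : (fun y => (g y)⁻¹) = fun y => Ring.inverse (g y) :=
      funext fun y => Matrix.nonsing_inv_eq_ringInverse _
    rw [hfun]
    exact h2
  refine ⟨(2⁻¹ : ℝ) •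
      (@ContinuousLinearMap.smulRight _ _ _ _ _ _ _ _ _ _ _ _ _ _ _ _ ContinuousMul.to_continuousSMul
        (((-mulLeftRight ℝ (Matrix (Fin n) (Fin n) ℝ) ↑hu.unit⁻¹ ↑hu.unit⁻¹)).comp
        (Aclm aa)) (Amat aa j)), ?_, fun i => ?_⟩
  · have h3 := (hinv.mul_const' (Amat aa j)).const_smul (2⁻¹ : ℝ)
    have he : Shat g j = fun y => (2⁻¹ : ℝ) • ((g y)⁻¹ * Amat aa j) :=
      funext (shat_eq haff j)
    rw [he]
    exact h3
  · rw [shat_eq haff i x, shat_eq haff j x]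
    show (2⁻¹ : ℝ) • (-((↑hu.unit⁻¹ : Matrix (Fin n) (Fin n) ℝ) * Aclm aa (Pi.single i 1) *
      (↑hu.unit⁻¹ : Matrix (Fin n) (Fin n) ℝ)) * Amat aa j) = _
    simp only [ContinuousLinearMap.coe_smul', Pi.smul_apply,
      ContinuousLinearMap.smulRight_apply, ContinuousLinearMap.comp_apply,
      ContinuousLinearMap.neg_apply, mulLeftRight_apply, Aclm_single, hgu, smul_eq_mul]
    simp only [smul_mul_assoc, mul_smul_comm, smul_smul, neg_mul, mul_neg, smul_neg, mul_assoc]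
    norm_num

lemma pdN_inl {f : (Fin n → ℝ) → ℝ} {f' : (Fin n → ℝ) →L[ℝ] ℝ}
    {p : (Fin n → ℝ) × (Fin n → ℝ)} (h : HasFDerivAt f f' p.1) (i : Fin n) :
    pdN (Sum.inl i) (fun q => f q.1) p = f' (Pi.single i 1) := by
  have h2 : HasFDerivAt (fun q : (Fin n → ℝ) × (Fin n → ℝ) => f q.1)
      (f'.comp (ContinuousLinearMap.fst ℝ (Fin n → ℝ) (Fin n → ℝ))) p :=
    h.comp p hasFDerivAt_fst
  rw [pdN, h2.fderiv]
  simp [eN]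

lemma pdN_inr {f : (Fin n → ℝ) → ℝ} {f' : (Fin n → ℝ) →L[ℝ] ℝ}
    {p : (Fin n → ℝ) × (Fin n → ℝ)} (h : HasFDerivAt f f' p.1) (i : Fin n) :
    pdN (Sum.inr i) (fun q => f q.1) p = 0 := by
  have h2 : HasFDerivAt (fun q : (Fin n → ℝ) × (Fin n → ℝ) => f q.1)
      (f'.comp (ContinuousLinearMap.fst ℝ (Fin n → ℝ) (Fin n → ℝ))) p :=
    h.comp p hasFDerivAt_fst
  rw [pdN, h2.fderiv]
  simp [eN]

lemma mpdN_fromBlocks_inl {F H K M : (Fin n → ℝ) → Matrix (Fin n) (Fin n) ℝ}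
    {F' H' K' M' : (Fin n → ℝ) →L[ℝ] Matrix (Fin n) (Fin n) ℝ}
    {p : (Fin n → ℝ) × (Fin n → ℝ)}
    (hF : HasFDerivAt F F' p.1) (hH : HasFDerivAt H H' p.1)
    (hK : HasFDerivAt K K' p.1) (hM : HasFDerivAt M M' p.1) (i : Fin n) :
    mpdN (Sum.inl i) (fun q => Matrix.fromBlocks (F q.1) (H q.1) (K q.1) (M q.1)) p =
      Matrix.fromBlocks (F' (Pi.single i 1)) (H' (Pi.single i 1))
        (K' (Pi.single i 1)) (M' (Pi.single i 1)) := by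
  ext A B
  cases A with
  | inl a =>
    cases B with
    | inl c => exact pdN_inl (entry_hasFDerivAt hF a c) i
    | inr c => exact pdN_inl (entry_hasFDerivAt hH a c) i
  | inr a =>
    cases B with
    | inl c => exact pdN_inl (entry_hasFDerivAt hK a c) i
    | inr c => exact pdN_inl (entry_hasFDerivAt hM a c) i

lemma mpdN_fromBlocks_inr {F H K M : (Fin n → ℝ) → Matrix (Fin n) (Fin n) ℝ}
    {F' H' K' M' : (Fin n → ℝ) →L[ℝ] Matrix (Fin n) (Fin n) ℝ}
    {p : (Fin n → ℝ) × (Fin n → ℝ)}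
    (hF : HasFDerivAt F F' p.1) (hH : HasFDerivAt H H' p.1)
    (hK : HasFDerivAt K K' p.1) (hM : HasFDerivAt M M' p.1) (i : Fin n) :
    mpdN (Sum.inr i) (fun q => Matrix.fromBlocks (F q.1) (H q.1) (K q.1) (M q.1)) p = 0 := by
  ext A B
  cases A with
  | inl a =>
    cases B with
    | inl c => exact pdN_inr (entry_hasFDerivAt hF a c) i
    | inr c => exact pdN_inr (entry_hasFDerivAt hH a c) i
  | inr a =>
    cases B with
    | inl c => exact pdN_inr (entry_hasFDerivAt hK a c) i
    | inr c => exact pdN_inr (entry_hasFDerivAt hM a c) i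

theorem stmt_9 {n : ℕ} (hn : 1 ≤ n) (U : Set (Fin n → ℝ))
    (g : (Fin n → ℝ) → Matrix (Fin n) (Fin n) ℝ)
    (hg : SpecialRealData n U g) :
    ∀ p ∈ U ×ˢ (Set.univ : Set (Fin n → ℝ)), ∀ i j : Fin n,
      (Riem (GammaLC g) (.inl i) (.inl j) p =
        Matrix.fromBlocks
          (-(Shat g i p.1 * Shat g j p.1 - Shat g j p.1 * Shat g i p.1)) 0 0
          (-(Shat g i p.1 * Shat g j p.1 - Shat g j p.1 * Shat g i p.1))) ∧
      (Riem (GammaLC g) (.inr i) (.inr j) p =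
        Matrix.fromBlocks
          (-(Shat g i p.1 * Shat g j p.1 - Shat g j p.1 * Shat g i p.1)) 0 0
          (-(Shat g i p.1 * Shat g j p.1 - Shat g j p.1 * Shat g i p.1))) ∧
      (Riem (GammaLC g) (.inl i) (.inr j) p =
        Matrix.fromBlocks
          0 (Shat g i p.1 * Shat g j p.1 + Shat g j p.1 * Shat g i p.1)
          (-(Shat g i p.1 * Shat g j p.1 + Shat g j p.1 * Shat g i p.1)) 0) := by
  obtain ⟨b, aa, -, -, -, haff'⟩ := hg.affine
  have haff : IsAff g b aa := fun x i j => haff' x i j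
  rintro p hp i j
  have hx : p.1 ∈ U := hp.1
  have hu : IsUnit (g p.1) :=
    (Matrix.isUnit_iff_isUnit_det _).mpr (hg.invertible p.1 hx)
  obtain ⟨Si', hSi, hSival⟩ := shat_hasDeriv haff hu i
  obtain ⟨Sj', hSj, hSjval⟩ := shat_hasDeriv haff hu j
  have h0 : HasFDerivAt (fun _ : Fin n → ℝ => (0 : Matrix (Fin n) (Fin n) ℝ))
      (0 : (Fin n → ℝ) →L[ℝ] Matrix (Fin n) (Fin n) ℝ) p.1 :=
    hasFDerivAt_const _ _
  set P := Shat g i p.1 * Shat g j p.1 with hP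
  set Q := Shat g j p.1 * Shat g i p.1 with hQ
  -- the horizontal derivatives of the Christoffel symbols
  have h11 : mpdN (Sum.inl i) (GammaLC g (Sum.inl j)) p =
      Matrix.fromBlocks ((-2 : ℝ) • P) 0 0 ((-2 : ℝ) • P) := by
    have := mpdN_fromBlocks_inl hSj h0 h0 hSj i
    rw [show mpdN (Sum.inl i) (GammaLC g (Sum.inl j)) p
        = mpdN (Sum.inl i)
          (fun q => Matrix.fromBlocks (Shat g j q.1)
            ((fun _ => (0 : Matrix (Fin n) (Fin n) ℝ)) q.1)
            ((fun _ => (0 : Matrix (Fin n) (Fin n) ℝ)) q.1) (Shat g j q.1)) p from rfl,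
      this, hSjval i]
    simp [hP]
  have h11' : mpdN (Sum.inl j) (GammaLC g (Sum.inl i)) p =
      Matrix.fromBlocks ((-2 : ℝ) • Q) 0 0 ((-2 : ℝ) • Q) := by
    have := mpdN_fromBlocks_inl hSi h0 h0 hSi j
    rw [show mpdN (Sum.inl j) (GammaLC g (Sum.inl i)) p
        = mpdN (Sum.inl j)
          (fun q => Matrix.fromBlocks (Shat g i q.1)
            ((fun _ => (0 : Matrix (Fin n) (Fin n) ℝ)) q.1)
            ((fun _ => (0 : Matrix (Fin n) (Fin n) ℝ)) q.1) (Shat g i q.1)) p from rfl,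
      this, hSival j]
    simp [hQ]
  have h12 : mpdN (Sum.inl i) (GammaLC g (Sum.inr j)) p =
      Matrix.fromBlocks 0 ((2 : ℝ) • P) ((-2 : ℝ) • P) 0 := by
    have := mpdN_fromBlocks_inl h0 hSj.neg hSj h0 i
    rw [show mpdN (Sum.inl i) (GammaLC g (Sum.inr j)) p
        = mpdN (Sum.inl i)
          (fun q => Matrix.fromBlocks ((fun _ => (0 : Matrix (Fin n) (Fin n) ℝ)) q.1)
            ((-Shat g j) q.1) (Shat g j q.1)
            ((fun _ => (0 : Matrix (Fin n) (Fin n) ℝ)) q.1)) p from rfl,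
      this]
    simp only [ContinuousLinearMap.neg_apply, hSjval i, ContinuousLinearMap.zero_apply]
    show fromBlocks 0 (-(Sj' (Pi.single i 1))) ((-2 : ℝ) • P) 0 = _
    rw [hSjval i, ← hP]
    rw [show -((-2 : ℝ) • P) = (2 : ℝ) • P by module]
  -- vertical derivatives vanish
  have hv1 : mpdN (Sum.inr j) (GammaLC g (Sum.inl i)) p = 0 := by
    have := mpdN_fromBlocks_inr hSi h0 h0 hSi j
    rw [show mpdN (Sum.inr j) (GammaLC g (Sum.inl i)) p
        = mpdN (Sum.inr j)
          (fun q => Matrix.fromBlocks (Shat g i q.1)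
            ((fun _ => (0 : Matrix (Fin n) (Fin n) ℝ)) q.1)
            ((fun _ => (0 : Matrix (Fin n) (Fin n) ℝ)) q.1) (Shat g i q.1)) p from rfl,
      this]
  have hv2 : mpdN (Sum.inr i) (GammaLC g (Sum.inr j)) p = 0 := by
    have := mpdN_fromBlocks_inr h0 hSj.neg hSj h0 i
    rw [show mpdN (Sum.inr i) (GammaLC g (Sum.inr j)) p
        = mpdN (Sum.inr i)
          (fun q => Matrix.fromBlocks ((fun _ => (0 : Matrix (Fin n) (Fin n) ℝ)) q.1)
            ((-Shat g j) q.1) (Shat g j q.1)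
            ((fun _ => (0 : Matrix (Fin n) (Fin n) ℝ)) q.1)) p from rfl,
      this]
  have hv3 : mpdN (Sum.inr j) (GammaLC g (Sum.inr i)) p = 0 := by
    have := mpdN_fromBlocks_inr h0 hSi.neg hSi h0 j
    rw [show mpdN (Sum.inr j) (GammaLC g (Sum.inr i)) p
        = mpdN (Sum.inr j)
          (fun q => Matrix.fromBlocks ((fun _ => (0 : Matrix (Fin n) (Fin n) ℝ)) q.1)
            ((-Shat g i) q.1) (Shat g i q.1)
            ((fun _ => (0 : Matrix (Fin n) (Fin n) ℝ)) q.1)) p from rfl,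
      this]
  have hΓl : ∀ k : Fin n, GammaLC g (Sum.inl k) p =
      Matrix.fromBlocks (Shat g k p.1) 0 0 (Shat g k p.1) := fun _ => rfl
  have hΓr : ∀ k : Fin n, GammaLC g (Sum.inr k) p =
      Matrix.fromBlocks 0 (-(Shat g k p.1)) (Shat g k p.1) 0 := fun _ => rfl
  refine ⟨?_, ?_, ?_⟩
  · rw [Riem, h11, h11', hΓl i, hΓl j]
    simp only [Matrix.fromBlocks_multiply, sub_eq_add_neg, Matrix.fromBlocks_neg,
      Matrix.fromBlocks_add, Matrix.fromBlocks_inj]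
    refine ⟨?_, ?_, ?_, ?_⟩ <;>
      simp only [Matrix.mul_zero, Matrix.zero_mul, add_zero, zero_add, ← hP, ← hQ] <;> module
  · rw [Riem, hv2, hv3, hΓr i, hΓr j]
    simp only [sub_zero, zero_sub, neg_zero, zero_add]
    simp only [Matrix.fromBlocks_multiply, sub_eq_add_neg, Matrix.fromBlocks_neg,
      Matrix.fromBlocks_add, Matrix.fromBlocks_inj]
    refine ⟨?_, ?_, ?_, ?_⟩ <;>
      simp only [Matrix.mul_zero, Matrix.zero_mul, Matrix.neg_mul, Matrix.mul_neg,
        add_zero, zero_add, ← hP, ← hQ] <;> module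
  · rw [Riem, h12, hv1, hΓl i, hΓr j]
    simp only [sub_zero]
    simp only [Matrix.fromBlocks_multiply, sub_eq_add_neg, Matrix.fromBlocks_neg,
      Matrix.fromBlocks_add, Matrix.fromBlocks_inj]
    refine ⟨?_, ?_, ?_, ?_⟩ <;>
      simp only [Matrix.mul_zero, Matrix.zero_mul, Matrix.neg_mul, Matrix.mul_neg,
        add_zero, zero_add, ← hP, ← hQ] <;> module
end Aux
end
end

section
/- Assume the data is special real. Then the Ricci curvature of the metric G on N, defined by ric(ξ,η) := Σ_K ⟨e^K, R_{K,ξ} η⟩ (trace over the first curvature slot, with R the Levi-Civita curvature of G in coordinates), satisfies ric((X,Y),(X,Y)) = 2 tr(Ŝ_X²) + 2 tr(Ŝ_Y²) for all X, Y ∈ ℝⁿ, where Ŝ_X := Σ_i X^i Ŝ_i. In particular, if g(x) is positive definite for all x ∈ U, then the Ricci curvature of G is positive semidefinite. -/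
open Matrix

noncomputable section

/-- The Ricci curvature `ric(ξ,η) = Σ_K ⟨e^K, R_{K,ξ} η⟩` of a connection on `N`
with Christoffel symbols `Γ` (trace over the first curvature slot). -/
def ricci {n : ℕ}
    (Γ : Fin n ⊕ Fin n → (Fin n → ℝ) × (Fin n → ℝ) → Matrix (Fin n ⊕ Fin n) (Fin n ⊕ Fin n) ℝ)
    (p : (Fin n → ℝ) × (Fin n → ℝ)) (ξ η : Fin n ⊕ Fin n → ℝ) : ℝ :=
  ∑ K : Fin n ⊕ Fin n, ∑ I : Fin n ⊕ Fin n, ξ I * (Riem Γ K I p *ᵥ η) K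

/-! ### Auxiliary machinery -/

attribute [local instance] Matrix.linftyOpNormedRing Matrix.linftyOpNormedAlgebra
  Matrix.linftyOpNormedAddCommGroup

namespace Aux

variable {n : ℕ} (a : Fin n → Fin n → Fin n → ℝ) (b : Matrix (Fin n) (Fin n) ℝ)
  (g : (Fin n → ℝ) → Matrix (Fin n) (Fin n) ℝ)

/-- The `k`-slice of the cubic form, as a matrix. -/
def Amat (k : Fin n) : Matrix (Fin n) (Fin n) ℝ := Matrix.of fun i j => a i j k

/-- Extracting a matrix entry, as a continuous linear map. -/
def entryCLM (c d : Fin n) : Matrix (Fin n) (Fin n) ℝ →L[ℝ] ℝ :=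
  LinearMap.toContinuousLinearMap
    { toFun := fun M => M c d
      map_add' := fun _ _ => rfl
      map_smul' := fun _ _ => rfl }

@[simp] lemma entryCLM_apply (c d : Fin n) (M : Matrix (Fin n) (Fin n) ℝ) :
    entryCLM c d M = M c d := rfl

lemma hasFDerivAt_affine {m : ℕ} (c : ℝ) (w : Fin m → ℝ) (x : Fin m → ℝ) :
    HasFDerivAt (fun y : Fin m → ℝ => c + ∑ l, w l * y l)
      (∑ l, w l • (ContinuousLinearMap.proj l : (Fin m → ℝ) →L[ℝ] ℝ)) x := by
  have h : HasFDerivAt (fun y : Fin m → ℝ => ∑ l, w l * y l)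
      (∑ l, w l • (ContinuousLinearMap.proj l : (Fin m → ℝ) →L[ℝ] ℝ)) x := by
    apply HasFDerivAt.fun_sum
    intro l _
    exact ((hasFDerivAt_apply l x).const_mul (w l))
  simpa using h.const_add c

lemma pd_affine {m : ℕ} (c : ℝ) (w : Fin m → ℝ) (i : Fin m) (x : Fin m → ℝ) :
    pd i (fun y => c + ∑ l, w l * y l) x = w i := by
  rw [pd, (hasFDerivAt_affine c w x).fderiv]
  simp [ContinuousLinearMap.sum_apply, Pi.single_apply, Finset.sum_ite_eq', mul_comm]

lemma mpd_g (hgx : ∀ (x : Fin n → ℝ) (i j : Fin n), g x i j = b i j + ∑ k, a i j k * x k)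
    (i : Fin n) (y : Fin n → ℝ) : mpd i g y = Amat a i := by
  ext c d
  have : (fun y => g y c d) = fun y => b c d + ∑ l, a c d l * y l := by
    funext z; exact hgx z c d
  simp only [mpd, Matrix.of_apply, this]
  rw [pd_affine]
  rfl

lemma g_eq (hgx : ∀ (x : Fin n → ℝ) (i j : Fin n), g x i j = b i j + ∑ k, a i j k * x k) :
    g = fun y => b + ∑ l, y l • Amat a l := by
  funext y
  ext i j
  simp [hgx, Amat, Matrix.sum_apply, mul_comm]

lemma hasFDerivAt_g
    (hgx : ∀ (x : Fin n → ℝ) (i j : Fin n), g x i j = b i j + ∑ k, a i j k * x k)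
    (x : Fin n → ℝ) :
    HasFDerivAt g
      (∑ l, (ContinuousLinearMap.proj l : (Fin n → ℝ) →L[ℝ] ℝ).smulRight (Amat a l)) x := by
  rw [g_eq a b g hgx]
  have h : HasFDerivAt (fun y : Fin n → ℝ => ∑ l, y l • Amat a l)
      (∑ l, (ContinuousLinearMap.proj l : (Fin n → ℝ) →L[ℝ] ℝ).smulRight (Amat a l)) x := by
    apply HasFDerivAt.fun_sum
    intro l _
    exact (hasFDerivAt_apply l x).smul_const (Amat a l)
  exact h.const_add b

lemma hasFDerivAt_inv
    (hgx : ∀ (x : Fin n → ℝ) (i j : Fin n), g x i j = b i j + ∑ k, a i j k * x k)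
    (x : Fin n → ℝ) (hdet : IsUnit (g x).det) :
    ∃ D : (Fin n → ℝ) →L[ℝ] Matrix (Fin n) (Fin n) ℝ,
      HasFDerivAt (fun y => (g y)⁻¹) D x ∧
      ∀ j, D (Pi.single j 1) = -((g x)⁻¹ * Amat a j * (g x)⁻¹) := by
  obtain ⟨u, hu⟩ := (Matrix.isUnit_iff_isUnit_det _).2 hdet
  have hinv : HasFDerivAt (Ring.inverse : Matrix (Fin n) (Fin n) ℝ → _)
      (-ContinuousLinearMap.mulLeftRight ℝ _ ↑u⁻¹ ↑u⁻¹) (g x) := by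
    rw [← hu]; exact hasFDerivAt_ringInverse u
  have hcomp := hinv.comp x (hasFDerivAt_g a b g hgx x)
  refine ⟨(-ContinuousLinearMap.mulLeftRight ℝ _ ↑u⁻¹ ↑u⁻¹).comp
      (∑ l, (ContinuousLinearMap.proj l : (Fin n → ℝ) →L[ℝ] ℝ).smulRight (Amat a l)), ?_, ?_⟩
  · have : (fun y => (g y)⁻¹) = fun y => Ring.inverse (g y) := by
      funext y; exact Matrix.nonsing_inv_eq_ringInverse _
    rw [this]; exact hcomp
  · intro j
    have hiu : (↑u⁻¹ : Matrix (Fin n) (Fin n) ℝ) = (g x)⁻¹ := by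
      rw [Matrix.coe_units_inv, hu]
    have happ : (∑ l, (ContinuousLinearMap.proj l : (Fin n → ℝ) →L[ℝ] ℝ).smulRight (Amat a l))
        (Pi.single j 1) = Amat a j := by
      simp [ContinuousLinearMap.sum_apply, Pi.single_apply]
    change -(ContinuousLinearMap.mulLeftRight ℝ _ ↑u⁻¹ ↑u⁻¹
      ((∑ l, (ContinuousLinearMap.proj l : (Fin n → ℝ) →L[ℝ] ℝ).smulRight (Amat a l))
        (Pi.single j 1))) = _
    rw [happ, ContinuousLinearMap.mulLeftRight_apply, hiu]

lemma S_deriv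
    (hgx : ∀ (x : Fin n → ℝ) (i j : Fin n), g x i j = b i j + ∑ k, a i j k * x k)
    (x : Fin n → ℝ) (hdet : IsUnit (g x).det) (i : Fin n) :
    ∃ D : (Fin n → ℝ) →L[ℝ] Matrix (Fin n) (Fin n) ℝ,
      HasFDerivAt (fun y => Shat g i y) D x ∧
      ∀ j, D (Pi.single j 1) = -(2 : ℝ) • (Shat g j x * Shat g i x) := by
  obtain ⟨Dinv, hDinv, hDval⟩ := hasFDerivAt_inv a b g hgx x hdet
  have hSfun : (fun y => Shat g i y) = fun y => (2⁻¹ : ℝ) • ((g y)⁻¹ * Amat a i) := by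
    funext y; rw [Shat, mpd_g a b g hgx]
  set T : Matrix (Fin n) (Fin n) ℝ →L[ℝ] Matrix (Fin n) (Fin n) ℝ :=
    (2⁻¹ : ℝ) • (ContinuousLinearMap.mul ℝ (Matrix (Fin n) (Fin n) ℝ)).flip (Amat a i) with hT
  refine ⟨T.comp Dinv, ?_, ?_⟩
  · rw [hSfun]
    exact (T.hasFDerivAt.comp x hDinv :)
  · intro j
    have : T (Dinv (Pi.single j 1)) = (2⁻¹ : ℝ) • (Dinv (Pi.single j 1) * Amat a i) := by
      rw [hT]; rfl
    rw [ContinuousLinearMap.comp_apply, this, hDval j, Shat, Shat,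
      mpd_g a b g hgx, mpd_g a b g hgx]
    simp only [Matrix.smul_mul, Matrix.mul_smul, smul_smul, neg_mul, Matrix.neg_mul, smul_neg,
      Matrix.mul_assoc]
    norm_num

lemma S_entry
    (hgx : ∀ (x : Fin n → ℝ) (i j : Fin n), g x i j = b i j + ∑ k, a i j k * x k)
    (x : Fin n → ℝ) (hdet : IsUnit (g x).det) (i c d : Fin n) :
    ∃ D : (Fin n → ℝ) →L[ℝ] ℝ,
      HasFDerivAt (fun y => Shat g i y c d) D x ∧
      ∀ j, D (Pi.single j 1) = (-(2 : ℝ) • (Shat g j x * Shat g i x)) c d := by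
  obtain ⟨D, hD, hDv⟩ := S_deriv a b g hgx x hdet i
  refine ⟨(entryCLM c d).comp D, ?_, ?_⟩
  · exact ((entryCLM c d).hasFDerivAt.comp x hD :)
  · intro j
    rw [ContinuousLinearMap.comp_apply, entryCLM_apply, hDv j]

lemma pdN_fst {f : (Fin n → ℝ) → ℝ} {D : (Fin n → ℝ) →L[ℝ] ℝ}
    {p : (Fin n → ℝ) × (Fin n → ℝ)} (hf : HasFDerivAt f D p.1) :
    (∀ i, pdN (.inl i) (fun q => f q.1) p = D (Pi.single i 1)) ∧
    (∀ i, pdN (.inr i) (fun q => f q.1) p = 0) := by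
  have h : HasFDerivAt (fun q : (Fin n → ℝ) × (Fin n → ℝ) => f q.1)
      (D.comp (ContinuousLinearMap.fst ℝ _ _)) p := hf.comp p hasFDerivAt_fst
  constructor
  · intro i
    rw [pdN, h.fderiv]
    simp [eN]
  · intro i
    rw [pdN, h.fderiv]
    simp [eN]

lemma pdN_const (c : ℝ) (I : Fin n ⊕ Fin n) (p : (Fin n → ℝ) × (Fin n → ℝ)) :
    pdN I (fun _ => c) p = 0 := by
  rw [pdN, fderiv_fun_const]
  simp

lemma sum_trace (S : Fin n → Matrix (Fin n) (Fin n) ℝ)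
    (hS : ∀ i c j, S i c j = S j c i) (Z : Fin n → ℝ) :
    ∑ k, ∑ i, Z i * ((S i * S k) *ᵥ Z) k =
      Matrix.trace ((∑ i, Z i • S i) * (∑ i, Z i • S i)) := by
  have lhs : ∀ k i, Z i * ((S i * S k) *ᵥ Z) k
      = ∑ c, ∑ d, Z i * (S i k c * (S d c k * Z d)) := by
    intro k i
    simp only [mulVec, dotProduct, Matrix.mul_apply, Finset.sum_mul, Finset.mul_sum]
    rw [Finset.sum_comm]
    refine Finset.sum_congr rfl fun c _ => Finset.sum_congr rfl fun d _ => ?_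
    rw [hS k c d]
    ring
  simp only [lhs, Matrix.trace, Matrix.diag, Matrix.mul_apply, Matrix.sum_apply,
    Matrix.smul_apply, smul_eq_mul, Finset.sum_mul, Finset.mul_sum]
  refine Finset.sum_congr rfl fun k _ => ?_
  rw [Finset.sum_comm]
  refine Finset.sum_congr rfl fun c _ => ?_
  rw [Finset.sum_comm]
  refine Finset.sum_congr rfl fun i _ => Finset.sum_congr rfl fun d _ => by ring

lemma trace_sq_nonneg {H A : Matrix (Fin n) (Fin n) ℝ}
    (hH : H.PosSemidef) (hA : A.IsSymm) : 0 ≤ Matrix.trace (H * A * (H * A)) := by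
  obtain ⟨P, hP2, hPsymm⟩ : ∃ P : Matrix (Fin n) (Fin n) ℝ, P * P = H ∧ Pᵀ = P := by
    open scoped MatrixOrder in
    exact ⟨CFC.sqrt H, CFC.sqrt_mul_sqrt_self H hH.nonneg, by
      have := (CFC.sqrt_nonneg H).posSemidef.isHermitian
      rwa [Matrix.IsHermitian, conjTranspose_eq_transpose_of_trivial] at this⟩
  set N := P * A * P with hNdef
  have key : Matrix.trace (H * A * (H * A)) = Matrix.trace (N * N) := by
    rw [← hP2]
    have h1 : P * P * A * (P * P * A) = P * (P * A * P * P * A) := by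
      simp only [Matrix.mul_assoc]
    rw [h1, Matrix.trace_mul_comm, hNdef]
    simp only [Matrix.mul_assoc]
  have hN : Nᵀ = N := by
    rw [hNdef, Matrix.transpose_mul, Matrix.transpose_mul, hPsymm, hA.eq, Matrix.mul_assoc]
  rw [key]
  have htr : Matrix.trace (N * N) = ∑ k, ∑ c, N k c * N c k := by
    simp [Matrix.trace, Matrix.diag, Matrix.mul_apply]
  rw [htr]
  refine Finset.sum_nonneg fun k _ => Finset.sum_nonneg fun c _ => ?_
  have hsym : N c k = N k c := by
    have := congrFun (congrFun hN k) c
    simpa [Matrix.transpose_apply] using this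
  rw [hsym]
  exact mul_self_nonneg _

end Aux
section Curvature

variable {n : ℕ} (a : Fin n → Fin n → Fin n → ℝ) (b : Matrix (Fin n) (Fin n) ℝ)
  (g : (Fin n → ℝ) → Matrix (Fin n) (Fin n) ℝ)
  (hgx : ∀ (x : Fin n → ℝ) (i j : Fin n), g x i j = b i j + ∑ k, a i j k * x k)
  (p : (Fin n → ℝ) × (Fin n → ℝ)) (hdet : IsUnit (g p.1).det)

include hgx hdet

lemma mpdN_Gamma_l_l (k i : Fin n) :
    mpdN (.inl k) (GammaLC g (.inl i)) p =
      Matrix.fromBlocks (-(2 : ℝ) • (Shat g k p.1 * Shat g i p.1)) 0 0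
        (-(2 : ℝ) • (Shat g k p.1 * Shat g i p.1)) := by
  obtain ⟨D, hD, hDv⟩ : ∃ D : (Fin n → ℝ) →L[ℝ] Matrix (Fin n) (Fin n) ℝ, _ :=
    Aux.S_deriv a b g hgx p.1 hdet i
  ext A B
  cases A with
  | inl c =>
    cases B with
    | inl d =>
      obtain ⟨D', hD', hDv'⟩ := Aux.S_entry a b g hgx p.1 hdet i c d
      have : (fun q : (Fin n → ℝ) × (Fin n → ℝ) =>
          GammaLC g (.inl i) q (Sum.inl c) (Sum.inl d)) = fun q => Shat g i q.1 c d := by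
        funext q; simp [GammaLC]
      simp only [mpdN, Matrix.of_apply, this, Matrix.fromBlocks_apply₁₁]
      rw [(Aux.pdN_fst hD').1 k, hDv' k]
    | inr d =>
      have : (fun q : (Fin n → ℝ) × (Fin n → ℝ) =>
          GammaLC g (.inl i) q (Sum.inl c) (Sum.inr d)) = fun _ => (0 : ℝ) := by
        funext q; simp [GammaLC]
      simp only [mpdN, Matrix.of_apply, this, Matrix.fromBlocks_apply₁₂]
      rw [Aux.pdN_const]
      simp
  | inr c =>
    cases B with
    | inl d =>
      have : (fun q : (Fin n → ℝ) × (Fin n → ℝ) =>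
          GammaLC g (.inl i) q (Sum.inr c) (Sum.inl d)) = fun _ => (0 : ℝ) := by
        funext q; simp [GammaLC]
      simp only [mpdN, Matrix.of_apply, this, Matrix.fromBlocks_apply₂₁]
      rw [Aux.pdN_const]
      simp
    | inr d =>
      obtain ⟨D', hD', hDv'⟩ := Aux.S_entry a b g hgx p.1 hdet i c d
      have : (fun q : (Fin n → ℝ) × (Fin n → ℝ) =>
          GammaLC g (.inl i) q (Sum.inr c) (Sum.inr d)) = fun q => Shat g i q.1 c d := by
        funext q; simp [GammaLC]
      simp only [mpdN, Matrix.of_apply, this, Matrix.fromBlocks_apply₂₂]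
      rw [(Aux.pdN_fst hD').1 k, hDv' k]


lemma mpdN_Gamma_l_r (k i : Fin n) :
    mpdN (.inl k) (GammaLC g (.inr i)) p =
      Matrix.fromBlocks 0 ((2 : ℝ) • (Shat g k p.1 * Shat g i p.1))
        (-(2 : ℝ) • (Shat g k p.1 * Shat g i p.1)) 0 := by
  ext A B
  cases A with
  | inl c =>
    cases B with
    | inl d =>
      have : (fun q : (Fin n → ℝ) × (Fin n → ℝ) =>
          GammaLC g (.inr i) q (Sum.inl c) (Sum.inl d)) = fun _ => (0 : ℝ) := by
        funext q; simp [GammaLC]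
      simp only [mpdN, Matrix.of_apply, this, Matrix.fromBlocks_apply₁₁]
      rw [Aux.pdN_const]; simp
    | inr d =>
      obtain ⟨D', hD', hDv'⟩ := Aux.S_entry a b g hgx p.1 hdet i c d
      have : (fun q : (Fin n → ℝ) × (Fin n → ℝ) =>
          GammaLC g (.inr i) q (Sum.inl c) (Sum.inr d)) = fun q => -Shat g i q.1 c d := by
        funext q; simp [GammaLC]
      simp only [mpdN, Matrix.of_apply, this, Matrix.fromBlocks_apply₁₂]
      rw [(Aux.pdN_fst (f := fun y => -Shat g i y c d) hD'.neg).1 k]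
      simp only [ContinuousLinearMap.neg_apply, hDv' k]
      simp [Matrix.smul_apply]
  | inr c =>
    cases B with
    | inl d =>
      obtain ⟨D', hD', hDv'⟩ := Aux.S_entry a b g hgx p.1 hdet i c d
      have : (fun q : (Fin n → ℝ) × (Fin n → ℝ) =>
          GammaLC g (.inr i) q (Sum.inr c) (Sum.inl d)) = fun q => Shat g i q.1 c d := by
        funext q; simp [GammaLC]
      simp only [mpdN, Matrix.of_apply, this, Matrix.fromBlocks_apply₂₁]
      rw [(Aux.pdN_fst hD').1 k, hDv' k]
    | inr d =>
      have : (fun q : (Fin n → ℝ) × (Fin n → ℝ) =>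
          GammaLC g (.inr i) q (Sum.inr c) (Sum.inr d)) = fun _ => (0 : ℝ) := by
        funext q; simp [GammaLC]
      simp only [mpdN, Matrix.of_apply, this, Matrix.fromBlocks_apply₂₂]
      rw [Aux.pdN_const]; simp

lemma mpdN_Gamma_r (k : Fin n) (J : Fin n ⊕ Fin n) :
    mpdN (.inr k) (GammaLC g J) p = 0 := by
  have key : ∀ (c d : Fin n) (i : Fin n) (s : ℝ),
      pdN (.inr k) (fun q : (Fin n → ℝ) × (Fin n → ℝ) => s * Shat g i q.1 c d) p = 0 := by
    intro c d i s
    obtain ⟨D', hD', _⟩ := Aux.S_entry a b g hgx p.1 hdet i c d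
    exact (Aux.pdN_fst (hD'.const_mul s)).2 k
  cases J with
  | inl i =>
    ext A B
    cases A with
    | inl c =>
      cases B with
      | inl d =>
        have : (fun q : (Fin n → ℝ) × (Fin n → ℝ) =>
            GammaLC g (.inl i) q (Sum.inl c) (Sum.inl d))
            = fun q => (1 : ℝ) * Shat g i q.1 c d := by
          funext q; simp [GammaLC]
        simp only [mpdN, Matrix.of_apply, this, key, Matrix.zero_apply]
      | inr d =>
        have : (fun q : (Fin n → ℝ) × (Fin n → ℝ) =>
            GammaLC g (.inl i) q (Sum.inl c) (Sum.inr d)) = fun _ => (0 : ℝ) := by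
          funext q; simp [GammaLC]
        simp only [mpdN, Matrix.of_apply, this, Aux.pdN_const, Matrix.zero_apply]
    | inr c =>
      cases B with
      | inl d =>
        have : (fun q : (Fin n → ℝ) × (Fin n → ℝ) =>
            GammaLC g (.inl i) q (Sum.inr c) (Sum.inl d)) = fun _ => (0 : ℝ) := by
          funext q; simp [GammaLC]
        simp only [mpdN, Matrix.of_apply, this, Aux.pdN_const, Matrix.zero_apply]
      | inr d =>
        have : (fun q : (Fin n → ℝ) × (Fin n → ℝ) =>
            GammaLC g (.inl i) q (Sum.inr c) (Sum.inr d))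
            = fun q => (1 : ℝ) * Shat g i q.1 c d := by
          funext q; simp [GammaLC]
        simp only [mpdN, Matrix.of_apply, this, key, Matrix.zero_apply]
  | inr i =>
    ext A B
    cases A with
    | inl c =>
      cases B with
      | inl d =>
        have : (fun q : (Fin n → ℝ) × (Fin n → ℝ) =>
            GammaLC g (.inr i) q (Sum.inl c) (Sum.inl d)) = fun _ => (0 : ℝ) := by
          funext q; simp [GammaLC]
        simp only [mpdN, Matrix.of_apply, this, Aux.pdN_const, Matrix.zero_apply]
      | inr d =>
        have : (fun q : (Fin n → ℝ) × (Fin n → ℝ) =>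
            GammaLC g (.inr i) q (Sum.inl c) (Sum.inr d))
            = fun q => (-1 : ℝ) * Shat g i q.1 c d := by
          funext q; simp [GammaLC]
        simp only [mpdN, Matrix.of_apply, this, key, Matrix.zero_apply]
    | inr c =>
      cases B with
      | inl d =>
        have : (fun q : (Fin n → ℝ) × (Fin n → ℝ) =>
            GammaLC g (.inr i) q (Sum.inr c) (Sum.inl d))
            = fun q => (1 : ℝ) * Shat g i q.1 c d := by
          funext q; simp [GammaLC]
        simp only [mpdN, Matrix.of_apply, this, key, Matrix.zero_apply]
      | inr d =>
        have : (fun q : (Fin n → ℝ) × (Fin n → ℝ) =>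
            GammaLC g (.inr i) q (Sum.inr c) (Sum.inr d)) = fun _ => (0 : ℝ) := by
          funext q; simp [GammaLC]
        simp only [mpdN, Matrix.of_apply, this, Aux.pdN_const, Matrix.zero_apply]

lemma riem_l_l (k i : Fin n) :
    Riem (GammaLC g) (.inl k) (.inl i) p =
      Matrix.fromBlocks (Shat g i p.1 * Shat g k p.1 - Shat g k p.1 * Shat g i p.1) 0 0
        (Shat g i p.1 * Shat g k p.1 - Shat g k p.1 * Shat g i p.1) := by
  rw [Riem, mpdN_Gamma_l_l a b g hgx p hdet k i, mpdN_Gamma_l_l a b g hgx p hdet i k]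
  simp only [GammaLC]
  rw [Matrix.fromBlocks_multiply, Matrix.fromBlocks_multiply]
  simp only [Matrix.mul_zero, Matrix.zero_mul, Matrix.mul_neg, Matrix.neg_mul,
    add_zero, zero_add, neg_zero, neg_neg]
  ext A B
  cases A <;> cases B <;>
    simp only [Matrix.sub_apply, Matrix.add_apply, Matrix.fromBlocks_apply₁₁,
      Matrix.fromBlocks_apply₁₂, Matrix.fromBlocks_apply₂₁, Matrix.fromBlocks_apply₂₂,
      Matrix.smul_apply, Matrix.neg_apply, Matrix.zero_apply, smul_eq_mul] <;>
    ring

lemma riem_l_r (k i : Fin n) :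
    Riem (GammaLC g) (.inl k) (.inr i) p =
      Matrix.fromBlocks 0
        (Shat g k p.1 * Shat g i p.1 + Shat g i p.1 * Shat g k p.1)
        (-(Shat g k p.1 * Shat g i p.1 + Shat g i p.1 * Shat g k p.1)) 0 := by
  rw [Riem, mpdN_Gamma_l_r a b g hgx p hdet k i, mpdN_Gamma_r a b g hgx p hdet i (.inl k)]
  simp only [GammaLC]
  rw [Matrix.fromBlocks_multiply, Matrix.fromBlocks_multiply]
  simp only [Matrix.mul_zero, Matrix.zero_mul, Matrix.mul_neg, Matrix.neg_mul,
    add_zero, zero_add, neg_zero, neg_neg]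
  ext A B
  cases A <;> cases B <;>
    simp only [Matrix.sub_apply, Matrix.add_apply, Matrix.fromBlocks_apply₁₁,
      Matrix.fromBlocks_apply₁₂, Matrix.fromBlocks_apply₂₁, Matrix.fromBlocks_apply₂₂,
      Matrix.smul_apply, Matrix.neg_apply, Matrix.zero_apply, smul_eq_mul] <;>
    ring

lemma riem_r_l (k i : Fin n) :
    Riem (GammaLC g) (.inr k) (.inl i) p =
      Matrix.fromBlocks 0
        (-(Shat g i p.1 * Shat g k p.1 + Shat g k p.1 * Shat g i p.1))
        (Shat g i p.1 * Shat g k p.1 + Shat g k p.1 * Shat g i p.1) 0 := by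
  rw [Riem, mpdN_Gamma_r a b g hgx p hdet k (.inl i), mpdN_Gamma_l_r a b g hgx p hdet i k]
  simp only [GammaLC]
  rw [Matrix.fromBlocks_multiply, Matrix.fromBlocks_multiply]
  simp only [Matrix.mul_zero, Matrix.zero_mul, Matrix.mul_neg, Matrix.neg_mul,
    add_zero, zero_add, neg_zero, neg_neg]
  ext A B
  cases A <;> cases B <;>
    simp only [Matrix.sub_apply, Matrix.add_apply, Matrix.fromBlocks_apply₁₁,
      Matrix.fromBlocks_apply₁₂, Matrix.fromBlocks_apply₂₁, Matrix.fromBlocks_apply₂₂,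
      Matrix.smul_apply, Matrix.neg_apply, Matrix.zero_apply, smul_eq_mul] <;>
    ring

lemma riem_r_r (k i : Fin n) :
    Riem (GammaLC g) (.inr k) (.inr i) p =
      Matrix.fromBlocks (Shat g i p.1 * Shat g k p.1 - Shat g k p.1 * Shat g i p.1) 0 0
        (Shat g i p.1 * Shat g k p.1 - Shat g k p.1 * Shat g i p.1) := by
  rw [Riem, mpdN_Gamma_r a b g hgx p hdet k (.inr i), mpdN_Gamma_r a b g hgx p hdet i (.inr k)]
  simp only [GammaLC]
  rw [Matrix.fromBlocks_multiply, Matrix.fromBlocks_multiply]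
  simp only [Matrix.mul_zero, Matrix.zero_mul, Matrix.mul_neg, Matrix.neg_mul,
    add_zero, zero_add, neg_zero, neg_neg]
  ext A B
  cases A <;> cases B <;>
    simp only [Matrix.sub_apply, Matrix.add_apply, Matrix.fromBlocks_apply₁₁,
      Matrix.fromBlocks_apply₁₂, Matrix.fromBlocks_apply₂₁, Matrix.fromBlocks_apply₂₂,
      Matrix.smul_apply, Matrix.neg_apply, Matrix.zero_apply, smul_eq_mul] <;>
    ring

omit hdet in
lemma hS_symm (ha2 : ∀ i j k, a i j k = a i k j) (i c j : Fin n) :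
    Shat g i p.1 c j = Shat g j p.1 c i := by
  simp only [Shat, Aux.mpd_g a b g hgx, Matrix.smul_apply, Matrix.mul_apply, smul_eq_mul]
  congr 1
  refine Finset.sum_congr rfl fun e _ => ?_
  have : Aux.Amat a i e j = Aux.Amat a j e i := by
    simp only [Aux.Amat, Matrix.of_apply]
    rw [ha2 e j i]
  rw [this]

lemma ricci_eq (ha2 : ∀ i j k, a i j k = a i k j) (X Y : Fin n → ℝ) :
    ricci (GammaLC g) p (Sum.elim X Y) (Sum.elim X Y) =
      2 * Matrix.trace ((∑ i, X i • Shat g i p.1) * (∑ i, X i • Shat g i p.1))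
      + 2 * Matrix.trace ((∑ i, Y i • Shat g i p.1) * (∑ i, Y i • Shat g i p.1)) := by
  have hS : ∀ i c j, (fun i => Shat g i p.1) i c j = (fun i => Shat g i p.1) j c i :=
    fun i c j => hS_symm a b g hgx p ha2 i c j
  rw [← Aux.sum_trace (fun i => Shat g i p.1) hS X,
    ← Aux.sum_trace (fun i => Shat g i p.1) hS Y]
  rw [ricci]
  simp only [Fintype.sum_sum_type]
  simp only [riem_l_l a b g hgx p hdet, riem_l_r a b g hgx p hdet,
    riem_r_l a b g hgx p hdet, riem_r_r a b g hgx p hdet]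
  simp only [Matrix.fromBlocks_mulVec, Sum.elim_comp_inl, Sum.elim_comp_inr, Sum.elim_inl,
    Sum.elim_inr, Matrix.zero_mulVec, add_zero, zero_add, Matrix.sub_mulVec, Matrix.add_mulVec,
    Matrix.neg_mulVec, Pi.sub_apply, Pi.add_apply, Pi.neg_apply]
  simp only [Finset.mul_sum]
  simp only [← Finset.sum_add_distrib]
  refine Finset.sum_congr rfl fun k _ => Finset.sum_congr rfl fun i _ => ?_
  ring

omit hdet in
lemma trace_SZ_nonneg (ha1 : ∀ i j k, a i j k = a j i k)
    (hpos : (g p.1).PosDef) (Z : Fin n → ℝ) :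
    0 ≤ Matrix.trace ((∑ i, Z i • Shat g i p.1) * (∑ i, Z i • Shat g i p.1)) := by
  have hH : ((g p.1)⁻¹).PosSemidef := hpos.inv.posSemidef
  set AZ : Matrix (Fin n) (Fin n) ℝ := ∑ i, Z i • Aux.Amat a i with hAZdef
  have hAZ : AZ.IsSymm := by
    rw [Matrix.IsSymm, hAZdef, Matrix.transpose_sum]
    refine Finset.sum_congr rfl fun i _ => ?_
    rw [Matrix.transpose_smul]
    congr 1
    ext c d
    simp only [Matrix.transpose_apply, Aux.Amat, Matrix.of_apply]
    exact ha1 d c i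
  have hSZ : (∑ i, Z i • Shat g i p.1) = (2⁻¹ : ℝ) • ((g p.1)⁻¹ * AZ) := by
    rw [hAZdef, Matrix.mul_sum, Finset.smul_sum]
    refine Finset.sum_congr rfl fun i _ => ?_
    rw [Shat, Aux.mpd_g a b g hgx, Matrix.mul_smul, smul_comm]
  rw [hSZ]
  have hmul : ((2⁻¹ : ℝ) • ((g p.1)⁻¹ * AZ)) * ((2⁻¹ : ℝ) • ((g p.1)⁻¹ * AZ))
      = (4⁻¹ : ℝ) • ((g p.1)⁻¹ * AZ * ((g p.1)⁻¹ * AZ)) := by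
    rw [Matrix.smul_mul, Matrix.mul_smul, smul_smul]
    norm_num
  rw [hmul, Matrix.trace_smul, smul_eq_mul]
  have := Aux.trace_sq_nonneg hH hAZ
  positivity
end Curvature

/-- for special real data, the Ricci curvature of `G` is
`ric((X,Y),(X,Y)) = 2 tr(Ŝ_X²) + 2 tr(Ŝ_Y²)`; if `g` is positive definite, then
the Ricci curvature of `G` is positive semidefinite. -/
theorem stmt_10 {n : ℕ} (hn : 1 ≤ n) (U : Set (Fin n → ℝ))
    (g : (Fin n → ℝ) → Matrix (Fin n) (Fin n) ℝ)
    (hg : SpecialRealData n U g) :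
    (∀ p ∈ U ×ˢ (Set.univ : Set (Fin n → ℝ)), ∀ X Y : Fin n → ℝ,
      ricci (GammaLC g) p (Sum.elim X Y) (Sum.elim X Y) =
        2 * Matrix.trace ((∑ i, X i • Shat g i p.1) * (∑ i, X i • Shat g i p.1))
        + 2 * Matrix.trace ((∑ i, Y i • Shat g i p.1) * (∑ i, Y i • Shat g i p.1))) ∧
    ((∀ x ∈ U, (g x).PosDef) →
      ∀ p ∈ U ×ˢ (Set.univ : Set (Fin n → ℝ)), ∀ ξ : Fin n ⊕ Fin n → ℝ,
        0 ≤ ricci (GammaLC g) p ξ ξ) := by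
  obtain ⟨b, a, hbsymm, ha1, ha2, hgx⟩ := hg.affine
  constructor
  · intro p hp X Y
    exact ricci_eq a b g hgx p (hg.invertible p.1 hp.1) ha2 X Y
  · intro hpos p hp ξ
    have hξ : ξ = Sum.elim (fun i => ξ (.inl i)) (fun i => ξ (.inr i)) := by
      funext A; cases A <;> rfl
    rw [hξ, ricci_eq a b g hgx p (hg.invertible p.1 hp.1) ha2]
    have t1 := trace_SZ_nonneg a b g hgx p ha1 (hpos p.1 hp.1) (fun i => ξ (.inl i))
    have t2 := trace_SZ_nonneg a b g hgx p ha1 (hpos p.1 hp.1) (fun i => ξ (.inr i))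
    linarith
end
end

section
/- The connection ∇^N on N with Christoffel symbols Γ^∇_i := blockdiag(0, 2Ŝ_i) and Γ^∇_{i'} := [[0,0],[2Ŝ_i,0]] is: (a) torsion-free: Γ^∇_I e_J = Γ^∇_J e_I for all I, J ∈ {1,…,2n}; (b) symplectic: ∂_I ω(e_J, e_K) = ω(Γ^∇_I e_J, e_K) + ω(e_J, Γ^∇_I e_K) for all I, J, K (i.e. ∇^N ω = 0); and (c) special: the tensor (I,J) ↦ (Γ^∇_I J − J Γ^∇_I) e_J is symmetric in I and J (i.e. ∇^N J is a symmetric (1,2)-tensor). -/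
open Matrix

noncomputable section

/-- Christoffel symbols of the special connection `∇^N` on `N`:
`Γ^∇_i = blockdiag(0, 2Ŝᵢ)`, `Γ^∇_{i'} = [[0,0],[2Ŝᵢ,0]]`. -/
def GammaNb {n : ℕ} (g : (Fin n → ℝ) → Matrix (Fin n) (Fin n) ℝ) :
    Fin n ⊕ Fin n → (Fin n → ℝ) × (Fin n → ℝ) → Matrix (Fin n ⊕ Fin n) (Fin n ⊕ Fin n) ℝ
  | .inl i => fun p => Matrix.fromBlocks 0 0 0 ((2 : ℝ) • Shat g i p.1)
  | .inr i => fun p => Matrix.fromBlocks 0 0 ((2 : ℝ) • Shat g i p.1) 0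

/-- The Kähler form `ω` on `N` as a bilinear form on `ℝ^{2n}` (indexed by
`Fin n ⊕ Fin n`): `ω((v,w),(v',w')) = ⟨g v, w'⟩ − ⟨g v', w⟩`. -/
def omegaS {n : ℕ} (g : (Fin n → ℝ) → Matrix (Fin n) (Fin n) ℝ)
    (p : (Fin n → ℝ) × (Fin n → ℝ)) (ξ η : Fin n ⊕ Fin n → ℝ) : ℝ :=
  (g p.1 *ᵥ fun i => ξ (Sum.inl i)) ⬝ᵥ (fun i => η (Sum.inr i))
    - (g p.1 *ᵥ fun i => η (Sum.inl i)) ⬝ᵥ (fun i => ξ (Sum.inr i))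

/-- The complex structure `J(v,w) = (−w,v)` as a matrix on `ℝ^{2n}`. -/
def Jmat (n : ℕ) : Matrix (Fin n ⊕ Fin n) (Fin n ⊕ Fin n) ℝ :=
  Matrix.fromBlocks 0 (-1) 1 0

/-! ### Auxiliary lemmas -/

section Aux

variable {n : ℕ} {U : Set (Fin n → ℝ)} {g : (Fin n → ℝ) → Matrix (Fin n) (Fin n) ℝ}
  {p : (Fin n → ℝ) × (Fin n → ℝ)}

lemma aux_fromBlocks_mulVec_inl (A B C D : Matrix (Fin n) (Fin n) ℝ) (j : Fin n) :
    (Matrix.fromBlocks A B C D) *ᵥ Pi.single (Sum.inl j) 1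
      = Sum.elim (fun a => A a j) (fun a => C a j) := by
  ext x
  rw [Matrix.mulVec_single]
  rcases x with a | a <;> simp

lemma aux_fromBlocks_mulVec_inr (A B C D : Matrix (Fin n) (Fin n) ℝ) (j : Fin n) :
    (Matrix.fromBlocks A B C D) *ᵥ Pi.single (Sum.inr j) 1
      = Sum.elim (fun a => B a j) (fun a => D a j) := by
  ext x
  rw [Matrix.mulVec_single]
  rcases x with a | a <;> simp

lemma aux_twoShat (i : Fin n) (x : Fin n → ℝ) :
    (2 : ℝ) • Shat g i x = (g x)⁻¹ * mpd i g x := by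
  rw [Shat, smul_smul]
  norm_num

lemma aux_shat_comm (hg : HessianData n U g) {x : Fin n → ℝ} (hx : x ∈ U)
    (i j a : Fin n) :
    ((2 : ℝ) • Shat g i x) a j = ((2 : ℝ) • Shat g j x) a i := by
  rw [aux_twoShat, aux_twoShat, Matrix.mul_apply, Matrix.mul_apply]
  refine Finset.sum_congr rfl fun b _ => ?_
  have h := hg.cubic_symm x hx b j i
  simp only [mpd, Matrix.of_apply]
  rw [h]

lemma aux_mpd_symm (hg : HessianData n U g) {x : Fin n → ℝ} (hx : x ∈ U)
    (i a b : Fin n) : mpd i g x a b = mpd i g x b a := by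
  have hev : (fun y => g y a b) =ᶠ[nhds x] (fun y => g y b a) :=
    Filter.eventuallyEq_of_mem (hg.isOpen.mem_nhds hx)
      (fun y hy => (hg.symm y hy).apply b a)
  simp only [mpd, Matrix.of_apply, pd]
  rw [hev.fderiv_eq]

lemma aux_sum_gA (hg : HessianData n U g) {x : Fin n → ℝ} (hx : x ∈ U)
    (i k j : Fin n) :
    ∑ a, g x a k * ((2 : ℝ) • Shat g i x) a j = mpd i g x k j := by
  have h1 : ∀ a, g x a k = g x k a := fun a => (hg.symm x hx).apply k a
  have : ∑ a, g x a k * ((2 : ℝ) • Shat g i x) a j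
      = (g x * ((2 : ℝ) • Shat g i x)) k j := by
    rw [Matrix.mul_apply]
    exact Finset.sum_congr rfl fun a _ => by rw [h1 a]
  rw [this, aux_twoShat, ← Matrix.mul_assoc,
    Matrix.mul_nonsing_inv _ (hg.invertible x hx), Matrix.one_mul]

lemma aux_gamma_ll (i j : Fin n) :
    GammaNb g (Sum.inl i) p *ᵥ Pi.single (Sum.inl j) 1 = 0 := by
  simp only [GammaNb]
  rw [aux_fromBlocks_mulVec_inl]
  ext x; rcases x with a | a <;> simp

lemma aux_gamma_lr (i j : Fin n) :
    GammaNb g (Sum.inl i) p *ᵥ Pi.single (Sum.inr j) 1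
      = Sum.elim (0 : Fin n → ℝ) (fun a => ((2 : ℝ) • Shat g i p.1) a j) := by
  simp only [GammaNb]
  rw [aux_fromBlocks_mulVec_inr]
  ext x; rcases x with a | a <;> simp

lemma aux_gamma_rl (i j : Fin n) :
    GammaNb g (Sum.inr i) p *ᵥ Pi.single (Sum.inl j) 1
      = Sum.elim (0 : Fin n → ℝ) (fun a => ((2 : ℝ) • Shat g i p.1) a j) := by
  simp only [GammaNb]
  rw [aux_fromBlocks_mulVec_inl]
  ext x; rcases x with a | a <;> simp

lemma aux_gamma_rr (i j : Fin n) :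
    GammaNb g (Sum.inr i) p *ᵥ Pi.single (Sum.inr j) 1 = 0 := by
  simp only [GammaNb]
  rw [aux_fromBlocks_mulVec_inr]
  ext x; rcases x with a | a <;> simp

/-! omega evaluations -/

lemma aux_omega_vl (w : Fin n → ℝ) (k : Fin n) :
    omegaS g p (Sum.elim 0 w) (Pi.single (Sum.inl k) 1)
      = -(∑ a, g p.1 a k * w a) := by
  simp [omegaS, dotProduct, mulVec, Pi.single_apply]

lemma aux_omega_vr (w : Fin n → ℝ) (k : Fin n) :
    omegaS g p (Sum.elim 0 w) (Pi.single (Sum.inr k) 1) = 0 := by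
  simp [omegaS, dotProduct, mulVec, Pi.single_apply]

lemma aux_omega_lv (j : Fin n) (w : Fin n → ℝ) :
    omegaS g p (Pi.single (Sum.inl j) 1) (Sum.elim 0 w)
      = ∑ a, g p.1 a j * w a := by
  simp [omegaS, dotProduct, mulVec, Pi.single_apply]

lemma aux_omega_rv (j : Fin n) (w : Fin n → ℝ) :
    omegaS g p (Pi.single (Sum.inr j) 1) (Sum.elim 0 w) = 0 := by
  simp [omegaS, dotProduct, mulVec, Pi.single_apply]

lemma aux_omega_zl (η : Fin n ⊕ Fin n → ℝ) : omegaS g p 0 η = 0 := by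
  simp [omegaS, dotProduct, mulVec]

lemma aux_omega_zr (ξ : Fin n ⊕ Fin n → ℝ) : omegaS g p ξ 0 = 0 := by
  simp [omegaS, dotProduct, mulVec]

lemma aux_omega_ll (j k : Fin n) :
    omegaS g p (Pi.single (Sum.inl j) 1) (Pi.single (Sum.inl k) 1) = 0 := by
  simp [omegaS, dotProduct, mulVec, Pi.single_apply]

lemma aux_omega_lr (j k : Fin n) :
    omegaS g p (Pi.single (Sum.inl j) 1) (Pi.single (Sum.inr k) 1) = g p.1 k j := by
  simp [omegaS, dotProduct, mulVec, Pi.single_apply]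

lemma aux_omega_rl (j k : Fin n) :
    omegaS g p (Pi.single (Sum.inr j) 1) (Pi.single (Sum.inl k) 1) = -(g p.1 j k) := by
  simp [omegaS, dotProduct, mulVec, Pi.single_apply]

lemma aux_omega_rr (j k : Fin n) :
    omegaS g p (Pi.single (Sum.inr j) 1) (Pi.single (Sum.inr k) 1) = 0 := by
  simp [omegaS, dotProduct, mulVec, Pi.single_apply]

/-! derivative lemmas -/

lemma aux_pdN_const (I : Fin n ⊕ Fin n) (c : ℝ) : pdN I (fun _ => c) p = 0 := by
  simp [pdN]

lemma aux_pdN_neg (I : Fin n ⊕ Fin n) (F : (Fin n → ℝ) × (Fin n → ℝ) → ℝ) :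
    pdN I (fun q => -(F q)) p = -pdN I F p := by
  simp [pdN, fderiv_neg]

lemma aux_pdN_fst (hg : HessianData n U g) (hp : p.1 ∈ U) (a b i : Fin n) :
    pdN (Sum.inl i) (fun q => g q.1 a b) p = pd i (fun y => g y a b) p.1 := by
  have hd : DifferentiableAt ℝ (fun y => g y a b) p.1 :=
    ((hg.smooth a b).contDiffAt (hg.isOpen.mem_nhds hp)).differentiableAt (by simp)
  have h : HasFDerivAt (fun q : (Fin n → ℝ) × (Fin n → ℝ) => g q.1 a b)
      ((fderiv ℝ (fun y => g y a b) p.1).comp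
        (ContinuousLinearMap.fst ℝ (Fin n → ℝ) (Fin n → ℝ))) p :=
    hd.hasFDerivAt.comp p hasFDerivAt_fst
  rw [pdN, h.fderiv]
  simp [eN, pd]

lemma aux_pdN_snd (hg : HessianData n U g) (hp : p.1 ∈ U) (a b i : Fin n) :
    pdN (Sum.inr i) (fun q => g q.1 a b) p = 0 := by
  have hd : DifferentiableAt ℝ (fun y => g y a b) p.1 :=
    ((hg.smooth a b).contDiffAt (hg.isOpen.mem_nhds hp)).differentiableAt (by simp)
  have h : HasFDerivAt (fun q : (Fin n → ℝ) × (Fin n → ℝ) => g q.1 a b)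
      ((fderiv ℝ (fun y => g y a b) p.1).comp
        (ContinuousLinearMap.fst ℝ (Fin n → ℝ) (Fin n → ℝ))) p :=
    hd.hasFDerivAt.comp p hasFDerivAt_fst
  rw [pdN, h.fderiv]
  simp [eN]

/-! commutators with J -/

lemma aux_T_inl (i : Fin n) :
    GammaNb g (Sum.inl i) p * Jmat n - Jmat n * GammaNb g (Sum.inl i) p
      = Matrix.fromBlocks 0 ((2 : ℝ) • Shat g i p.1) ((2 : ℝ) • Shat g i p.1) 0 := by
  simp only [GammaNb, Jmat]
  simp [Matrix.fromBlocks_multiply]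
  ext x y
  rcases x with a | a <;> rcases y with b | b <;> simp

lemma aux_T_inr (i : Fin n) :
    GammaNb g (Sum.inr i) p * Jmat n - Jmat n * GammaNb g (Sum.inr i) p
      = Matrix.fromBlocks ((2 : ℝ) • Shat g i p.1) 0 0 (-((2 : ℝ) • Shat g i p.1)) := by
  simp only [GammaNb, Jmat]
  simp [Matrix.fromBlocks_multiply]
  ext x y
  rcases x with a | a <;> rcases y with b | b <;> simp

end Aux

/-- for Hessian metric data, the connection `∇^N` with Christoffel
symbols `Γ^∇_i = blockdiag(0,2Ŝᵢ)`, `Γ^∇_{i'} = [[0,0],[2Ŝᵢ,0]]` is (a) torsion-free,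
(b) symplectic (`∇^N ω = 0`) and (c) special (`∇^N J` is a symmetric (1,2)-tensor). -/
theorem stmt_11 {n : ℕ} (hn : 1 ≤ n) (U : Set (Fin n → ℝ))
    (g : (Fin n → ℝ) → Matrix (Fin n) (Fin n) ℝ)
    (hg : HessianData n U g) :
    ∀ p ∈ U ×ˢ (Set.univ : Set (Fin n → ℝ)),
      (∀ I J : Fin n ⊕ Fin n,
        GammaNb g I p *ᵥ Pi.single J 1 = GammaNb g J p *ᵥ Pi.single I 1) ∧
      (∀ I J K : Fin n ⊕ Fin n,
        pdN I (fun q => omegaS g q (Pi.single J 1) (Pi.single K 1)) p =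
          omegaS g p (GammaNb g I p *ᵥ Pi.single J 1) (Pi.single K 1)
          + omegaS g p (Pi.single J 1) (GammaNb g I p *ᵥ Pi.single K 1)) ∧
      (∀ I J : Fin n ⊕ Fin n,
        (GammaNb g I p * Jmat n - Jmat n * GammaNb g I p) *ᵥ Pi.single J 1 =
        (GammaNb g J p * Jmat n - Jmat n * GammaNb g J p) *ᵥ Pi.single I 1) := by
  intro p hp
  have hx : p.1 ∈ U := hp.1
  refine ⟨?_, ?_, ?_⟩
  · -- (a) torsion-free
    rintro (i | i) (j | j)
    · rw [aux_gamma_ll, aux_gamma_ll]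
    · rw [aux_gamma_lr, aux_gamma_rl]
      ext x; rcases x with a | a
      · simp
      · exact aux_shat_comm hg hx i j a
    · rw [aux_gamma_rl, aux_gamma_lr]
      ext x; rcases x with a | a
      · simp
      · exact aux_shat_comm hg hx i j a
    · rw [aux_gamma_rr, aux_gamma_rr]
  · -- (b) symplectic
    rintro (i | i) (j | j) (k | k)
    · have hL : (fun q => omegaS g q (Pi.single (Sum.inl j) 1) (Pi.single (Sum.inl k) 1))
          = fun _ : (Fin n → ℝ) × (Fin n → ℝ) => (0 : ℝ) :=
        funext fun q => aux_omega_ll j k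
      rw [hL, aux_pdN_const, aux_gamma_ll, aux_gamma_ll, aux_omega_zl, aux_omega_zr, add_zero]
    · have hL : (fun q => omegaS g q (Pi.single (Sum.inl j) 1) (Pi.single (Sum.inr k) 1))
          = fun q : (Fin n → ℝ) × (Fin n → ℝ) => g q.1 k j :=
        funext fun q => aux_omega_lr j k
      rw [hL, aux_pdN_fst hg hx, aux_gamma_ll, aux_omega_zl, aux_gamma_lr, aux_omega_lv,
        zero_add, aux_sum_gA hg hx i j k, aux_mpd_symm hg hx i j k]
      rfl
    · have hL : (fun q => omegaS g q (Pi.single (Sum.inr j) 1) (Pi.single (Sum.inl k) 1))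
          = fun q : (Fin n → ℝ) × (Fin n → ℝ) => -(g q.1 j k) :=
        funext fun q => aux_omega_rl j k
      rw [hL, aux_pdN_neg, aux_pdN_fst hg hx, aux_gamma_lr, aux_omega_vl, aux_gamma_ll,
        aux_omega_zr, add_zero, aux_sum_gA hg hx i k j, aux_mpd_symm hg hx i k j]
      rfl
    · have hL : (fun q => omegaS g q (Pi.single (Sum.inr j) 1) (Pi.single (Sum.inr k) 1))
          = fun _ : (Fin n → ℝ) × (Fin n → ℝ) => (0 : ℝ) :=
        funext fun q => aux_omega_rr j k
      rw [hL, aux_pdN_const, aux_gamma_lr, aux_omega_vr, aux_gamma_lr, aux_omega_rv, add_zero]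
    · have hL : (fun q => omegaS g q (Pi.single (Sum.inl j) 1) (Pi.single (Sum.inl k) 1))
          = fun _ : (Fin n → ℝ) × (Fin n → ℝ) => (0 : ℝ) :=
        funext fun q => aux_omega_ll j k
      rw [hL, aux_pdN_const, aux_gamma_rl, aux_omega_vl, aux_gamma_rl, aux_omega_lv,
        aux_sum_gA hg hx i k j, aux_sum_gA hg hx i j k, aux_mpd_symm hg hx i k j]
      ring
    · have hL : (fun q => omegaS g q (Pi.single (Sum.inl j) 1) (Pi.single (Sum.inr k) 1))
          = fun q : (Fin n → ℝ) × (Fin n → ℝ) => g q.1 k j :=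
        funext fun q => aux_omega_lr j k
      rw [hL, aux_pdN_snd hg hx, aux_gamma_rl, aux_omega_vr, aux_gamma_rr, aux_omega_zr, add_zero]
    · have hL : (fun q => omegaS g q (Pi.single (Sum.inr j) 1) (Pi.single (Sum.inl k) 1))
          = fun q : (Fin n → ℝ) × (Fin n → ℝ) => -(g q.1 j k) :=
        funext fun q => aux_omega_rl j k
      rw [hL, aux_pdN_neg, aux_pdN_snd hg hx, neg_zero, aux_gamma_rr, aux_omega_zl,
        aux_gamma_rl, aux_omega_rv, add_zero]
    · have hL : (fun q => omegaS g q (Pi.single (Sum.inr j) 1) (Pi.single (Sum.inr k) 1))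
          = fun _ : (Fin n → ℝ) × (Fin n → ℝ) => (0 : ℝ) :=
        funext fun q => aux_omega_rr j k
      rw [hL, aux_pdN_const, aux_gamma_rr, aux_omega_zl, aux_gamma_rr, aux_omega_zr, add_zero]
  · -- (c) special
    rintro (i | i) (j | j)
    · rw [aux_T_inl, aux_T_inl, aux_fromBlocks_mulVec_inl, aux_fromBlocks_mulVec_inl]
      ext x; rcases x with a | a
      · simp
      · exact aux_shat_comm hg hx i j a
    · rw [aux_T_inl, aux_T_inr, aux_fromBlocks_mulVec_inr, aux_fromBlocks_mulVec_inl]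
      ext x; rcases x with a | a
      · exact aux_shat_comm hg hx i j a
      · simp
    · rw [aux_T_inr, aux_T_inl, aux_fromBlocks_mulVec_inl, aux_fromBlocks_mulVec_inr]
      ext x; rcases x with a | a
      · exact aux_shat_comm hg hx i j a
      · simp
    · rw [aux_T_inr, aux_T_inr, aux_fromBlocks_mulVec_inr, aux_fromBlocks_mulVec_inr]
      ext x; rcases x with a | a
      · simp
      · show (-((2 : ℝ) • Shat g i p.1)) a j = (-((2 : ℝ) • Shat g j p.1)) a i
        simp only [Matrix.neg_apply]
        rw [aux_shat_comm hg hx i j a]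
end
end

section
/- Assume the data is special real. Then the connection ∇^N with Christoffel symbols Γ^∇_i := blockdiag(0, 2Ŝ_i) and Γ^∇_{i'} := [[0,0],[2Ŝ_i,0]] is flat: its curvature R^∇_{IJ} := ∂_I Γ^∇_J − ∂_J Γ^∇_I + Γ^∇_I Γ^∇_J − Γ^∇_J Γ^∇_I vanishes identically on N for all I, J ∈ {1,…,2n}. (Together with the torsion-free, symplectic and special properties, this shows that the r-map of an affine special real manifold is an affine special pseudo-Kähler manifold.) -/
open Matrix

noncomputable section

attribute [local instance] Matrix.linftyOpNormedAddCommGroup Matrix.linftyOpNormedSpace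
  Matrix.linftyOpNormedRing Matrix.linftyOpNormedAlgebra

/-- Entry extraction as a continuous linear map. -/
def entryCLM {n : ℕ} (a b : Fin n) : Matrix (Fin n) (Fin n) ℝ →L[ℝ] ℝ :=
  LinearMap.toContinuousLinearMap (Matrix.entryLinearMap ℝ ℝ a b)

@[simp] lemma entryCLM_apply {n : ℕ} (a b : Fin n) (M : Matrix (Fin n) (Fin n) ℝ) :
    entryCLM a b M = M a b := rfl

/-- for special real data the connection `∇^N` is flat: its curvature
vanishes identically on `N = U × ℝⁿ`. -/
theorem stmt_12 {n : ℕ} (hn : 1 ≤ n) (U : Set (Fin n → ℝ))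
    (g : (Fin n → ℝ) → Matrix (Fin n) (Fin n) ℝ)
    (hg : SpecialRealData n U g) :
    ∀ p ∈ U ×ˢ (Set.univ : Set (Fin n → ℝ)), ∀ I J : Fin n ⊕ Fin n,
      Riem (GammaNb g) I J p = 0 := by
  classical
  obtain ⟨b, a, hb, ha1, ha2, hgeq⟩ := hg.affine
  set A : Fin n → Matrix (Fin n) (Fin n) ℝ := fun k => Matrix.of fun i j => a i j k with hA
  set ℓ : (Fin n → ℝ) →L[ℝ] Matrix (Fin n) (Fin n) ℝ :=
    ∑ k, (ContinuousLinearMap.proj k).smulRight (A k) with hℓdef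
  have hℓ : ∀ (v : Fin n → ℝ) (i j : Fin n), ℓ v i j = ∑ k, v k * a i j k := by
    intro v i j
    rw [hℓdef]
    simp [ContinuousLinearMap.sum_apply, Matrix.sum_apply, hA]
  have hℓs : ∀ k : Fin n, ℓ (Pi.single k 1) = A k := by
    intro k
    ext i j
    rw [hℓ, hA]
    simp [Pi.single_apply]
  have hgfun : ∀ x, g x = b + ℓ x := by
    intro x
    ext i j
    rw [Matrix.add_apply, hℓ, hgeq]
    simp [mul_comm]
  have hgd : ∀ x, HasFDerivAt g ℓ x := by
    intro x
    have h0 : HasFDerivAt (fun y => b + ℓ y) ℓ x := (ℓ.hasFDerivAt).const_add b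
    exact h0.congr_of_eventuallyEq (Filter.Eventually.of_forall hgfun)
  have hunit : ∀ x ∈ U, IsUnit (g x) :=
    fun x hx => (Matrix.isUnit_iff_isUnit_det _).mpr (hg.invertible x hx)
  have hmpd : ∀ (k : Fin n) (x : Fin n → ℝ), mpd k g x = A k := by
    intro k x
    ext i j
    have h1 : HasFDerivAt (fun y => g y i j) ((entryCLM i j).comp ℓ) x := by
      exact (entryCLM i j).hasFDerivAt.comp x (hgd x)
    show pd k (fun y => g y i j) x = A k i j
    rw [pd, h1.fderiv]
    simp [hℓs]
  have hShat : ∀ (j : Fin n) (x : Fin n → ℝ), (2:ℝ) • Shat g j x = (g x)⁻¹ * A j := by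
    intro j x
    rw [Shat, hmpd, smul_smul]
    norm_num
  -- pdN of a function pulled back from the first factor
  have hcomp : ∀ (f : (Fin n → ℝ) → ℝ) (f' : (Fin n → ℝ) →L[ℝ] ℝ)
      (p : (Fin n → ℝ) × (Fin n → ℝ)), HasFDerivAt f f' p.1 →
      ∀ I, pdN I (fun q => f q.1) p = f' (eN I).1 := by
    intro f f' p hf I
    have h2 : HasFDerivAt (fun q : (Fin n → ℝ) × (Fin n → ℝ) => f q.1)
        (f'.comp (ContinuousLinearMap.fst ℝ _ _)) p := by
      simpa [Function.comp_def] using hf.comp p hasFDerivAt_fst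
    rw [pdN, h2.fderiv]
    simp
  have hpdN_const : ∀ (c : ℝ) (p : (Fin n → ℝ) × (Fin n → ℝ)) (I : Fin n ⊕ Fin n),
      pdN I (fun _ => c) p = 0 := by
    intro c p I
    simp [pdN]
  -- the key derivative computation
  have hkey : ∀ (j a' b' : Fin n) (p : (Fin n → ℝ) × (Fin n → ℝ)), p.1 ∈ U →
      (∀ k, pdN (Sum.inl k) (fun q => ((g q.1)⁻¹ * A j) a' b') p
          = (-(((g p.1)⁻¹ * A k) * ((g p.1)⁻¹ * A j))) a' b') ∧
      (∀ k, pdN (Sum.inr k) (fun q => ((g q.1)⁻¹ * A j) a' b') p = 0) := by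
    intro j a' b' p hp
    have h := hunit p.1 hp
    have hinv : HasFDerivAt (fun y => (g y)⁻¹)
        ((-(ContinuousLinearMap.mulLeftRight ℝ _ (g p.1)⁻¹ (g p.1)⁻¹)).comp ℓ) p.1 := by
      have h1 := hasFDerivAt_ringInverse (𝕜 := ℝ) h.unit
      rw [h.unit_spec] at h1
      rw [Matrix.coe_units_inv, h.unit_spec] at h1
      have h2 := h1.comp p.1 (hgd p.1)
      simp only [Matrix.nonsing_inv_eq_ringInverse] at h2 ⊢
      exact h2
    have hTd : HasFDerivAt (fun y => (g y)⁻¹ * A j)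
        (MulOpposite.op (A j) • ((-(ContinuousLinearMap.mulLeftRight ℝ _ (g p.1)⁻¹ (g p.1)⁻¹)).comp ℓ))
        p.1 := hinv.mul_const' (A j)
    have hEntry : HasFDerivAt (fun y => ((g y)⁻¹ * A j) a' b')
        ((entryCLM a' b').comp
          (MulOpposite.op (A j) • ((-(ContinuousLinearMap.mulLeftRight ℝ _ (g p.1)⁻¹ (g p.1)⁻¹)).comp ℓ)))
        p.1 := by
      exact (entryCLM a' b').hasFDerivAt.comp p.1 hTd
    have hval := hcomp _ _ p hEntry
    constructor
    · intro k
      rw [hval (Sum.inl k)]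
      show ((-((g p.1)⁻¹ * ℓ (Pi.single k 1) * (g p.1)⁻¹)) * A j) a' b' = _
      simp [eN, ContinuousLinearMap.smulRight_apply, ContinuousLinearMap.comp_apply,
        ContinuousLinearMap.neg_apply, ContinuousLinearMap.mulLeftRight_apply, hℓs,
        smul_eq_mul, mul_assoc]
    · intro k
      rw [hval (Sum.inr k)]
      simp [eN]
  intro p hp I J
  have hp1 : p.1 ∈ U := hp.1
  -- derivative matrices
  have hE1 : ∀ k j : Fin n, mpdN (Sum.inl k) (GammaNb g (Sum.inl j)) p
      = Matrix.fromBlocks 0 0 0 (-(((g p.1)⁻¹ * A k) * ((g p.1)⁻¹ * A j))) := by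
    intro k j
    ext A' B'
    cases A' with
    | inl a' =>
      cases B' with
      | inl b' =>
        show pdN _ (fun q => GammaNb g (Sum.inl j) q (Sum.inl a') (Sum.inl b')) p = _
        simp [GammaNb, hpdN_const]
      | inr b' =>
        show pdN _ (fun q => GammaNb g (Sum.inl j) q (Sum.inl a') (Sum.inr b')) p = _
        simp [GammaNb, hpdN_const]
    | inr a' =>
      cases B' with
      | inl b' =>
        show pdN _ (fun q => GammaNb g (Sum.inl j) q (Sum.inr a') (Sum.inl b')) p = _
        simp [GammaNb, hpdN_const]
      | inr b' =>
        show pdN _ (fun q => GammaNb g (Sum.inl j) q (Sum.inr a') (Sum.inr b')) p = _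
        simp only [GammaNb, Matrix.fromBlocks_apply₂₂, hShat]
        rw [(hkey j a' b' p hp1).1 k]
  have hE2 : ∀ k j : Fin n, mpdN (Sum.inl k) (GammaNb g (Sum.inr j)) p
      = Matrix.fromBlocks 0 0 (-(((g p.1)⁻¹ * A k) * ((g p.1)⁻¹ * A j))) 0 := by
    intro k j
    ext A' B'
    cases A' with
    | inl a' =>
      cases B' with
      | inl b' =>
        show pdN _ (fun q => GammaNb g (Sum.inr j) q (Sum.inl a') (Sum.inl b')) p = _
        simp [GammaNb, hpdN_const]
      | inr b' =>
        show pdN _ (fun q => GammaNb g (Sum.inr j) q (Sum.inl a') (Sum.inr b')) p = _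
        simp [GammaNb, hpdN_const]
    | inr a' =>
      cases B' with
      | inl b' =>
        show pdN _ (fun q => GammaNb g (Sum.inr j) q (Sum.inr a') (Sum.inl b')) p = _
        simp only [GammaNb, Matrix.fromBlocks_apply₂₁, hShat]
        rw [(hkey j a' b' p hp1).1 k]
      | inr b' =>
        show pdN _ (fun q => GammaNb g (Sum.inr j) q (Sum.inr a') (Sum.inr b')) p = _
        simp [GammaNb, hpdN_const]
  have hE3 : ∀ (k : Fin n) (J : Fin n ⊕ Fin n), mpdN (Sum.inr k) (GammaNb g J) p = 0 := by
    intro k J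
    ext A' B'
    show pdN _ (fun q => GammaNb g J q A' B') p = (0 : Matrix _ _ ℝ) A' B'
    cases J with
    | inl j =>
      cases A' with
      | inl a' =>
        cases B' <;> simp [GammaNb, hpdN_const]
      | inr a' =>
        cases B' with
        | inl b' => simp [GammaNb, hpdN_const]
        | inr b' =>
          simp only [GammaNb, Matrix.fromBlocks_apply₂₂, hShat]
          rw [(hkey j a' b' p hp1).2 k]
          simp
    | inr j =>
      cases A' with
      | inl a' =>
        cases B' <;> simp [GammaNb, hpdN_const]
      | inr a' =>
        cases B' with
        | inl b' =>
          simp only [GammaNb, Matrix.fromBlocks_apply₂₁, hShat]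
          rw [(hkey j a' b' p hp1).2 k]
          simp
        | inr b' => simp [GammaNb, hpdN_const]
  -- products of Christoffel matrices
  have hP_ll : ∀ i j : Fin n, GammaNb g (Sum.inl i) p * GammaNb g (Sum.inl j) p
      = Matrix.fromBlocks 0 0 0 (((g p.1)⁻¹ * A i) * ((g p.1)⁻¹ * A j)) := by
    intro i j
    simp [GammaNb, Matrix.fromBlocks_multiply, hShat]
  have hP_lr : ∀ i j : Fin n, GammaNb g (Sum.inl i) p * GammaNb g (Sum.inr j) p
      = Matrix.fromBlocks 0 0 (((g p.1)⁻¹ * A i) * ((g p.1)⁻¹ * A j)) 0 := by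
    intro i j
    simp [GammaNb, Matrix.fromBlocks_multiply, hShat]
  have hP_rl : ∀ i j : Fin n, GammaNb g (Sum.inr i) p * GammaNb g (Sum.inl j) p = 0 := by
    intro i j
    simp [GammaNb, Matrix.fromBlocks_multiply, hShat]
  have hP_rr : ∀ i j : Fin n, GammaNb g (Sum.inr i) p * GammaNb g (Sum.inr j) p = 0 := by
    intro i j
    simp [GammaNb, Matrix.fromBlocks_multiply, hShat]
  cases I with
  | inl i =>
    cases J with
    | inl j =>
      rw [Riem, hE1 i j, hE1 j i, hP_ll i j, hP_ll j i]
      ext (x | x) (y | y) <;>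
        simp [Matrix.sub_apply, Matrix.add_apply, Matrix.neg_apply]
    | inr j =>
      rw [Riem, hE2 i j, hE3 j (Sum.inl i), hP_lr i j, hP_rl j i]
      ext (x | x) (y | y) <;>
        simp [Matrix.sub_apply, Matrix.add_apply, Matrix.neg_apply]
  | inr i =>
    cases J with
    | inl j =>
      rw [Riem, hE3 i (Sum.inl j), hE2 j i, hP_rl i j, hP_lr j i]
      ext (x | x) (y | y) <;>
        simp [Matrix.sub_apply, Matrix.add_apply, Matrix.neg_apply]
    | inr j =>
      rw [Riem, hE3 i (Sum.inr j), hE3 j (Sum.inr i), hP_rr i j, hP_rr j i]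
      simp
end
end
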